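/- arXiv:math/9412223 — 8 statements merged into one kernel-verified Lean document; each statement's English description precedes it below -/
import Mathlib

section
/- Let L be any lattice in ℝ^d. (a) If S_{d,k} + L ⊇ ℤ^d, then B_{d, k+d/2} + L = ℝ^d. (b) If S'_{d,k} + L ⊇ ℤ^d, then T_{d, k+d} + L = ℝ^d. -/
/-- Let `L` be a lattice in `ℝ^d` (generated by `d` linearly
independent vectors). (a) If `S_{d,k} + L ⊇ ℤ^d` then `B_{d,k+d/2} + L = ℝ^d`.
(b) If `S'_{d,k} + L ⊇ ℤ^d` then `T_{d,k+d} + L = ℝ^d`. -/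
theorem stmt3 (d k : ℕ) (v : Fin d → (Fin d → ℝ)) (hv : LinearIndependent ℝ v)
    (L : AddSubgroup (Fin d → ℝ)) (hL : L = AddSubgroup.closure (Set.range v)) :
    ((∀ x : Fin d → ℤ, ∃ s : Fin d → ℤ, (∑ i, |s i|) ≤ (k : ℤ) ∧
        ((fun i => (x i : ℝ)) - fun i => (s i : ℝ)) ∈ L) →
      ∀ y : Fin d → ℝ, ∃ b : Fin d → ℝ, (∑ i, |b i|) ≤ (k : ℝ) + d / 2 ∧ y - b ∈ L) ∧
    ((∀ x : Fin d → ℤ, ∃ s : Fin d → ℤ, (∀ i, 0 ≤ s i) ∧ (∑ i, s i) ≤ (k : ℤ) ∧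
        ((fun i => (x i : ℝ)) - fun i => (s i : ℝ)) ∈ L) →
      ∀ y : Fin d → ℝ, ∃ b : Fin d → ℝ, (∀ i, 0 ≤ b i) ∧ (∑ i, b i) ≤ (k : ℝ) + d ∧
        y - b ∈ L) := by
  constructor
  · intro h y
    obtain ⟨s, hs1, hs2⟩ := h (fun i => round (y i))
    refine ⟨fun i => (s i : ℝ) + (y i - (round (y i) : ℤ)), ?_, ?_⟩
    · have hsum : (∑ i, |(s i : ℝ)|) ≤ (k : ℝ) := by exact_mod_cast hs1
      calc ∑ i, |(s i : ℝ) + (y i - (round (y i) : ℤ))|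
          ≤ ∑ i, (|(s i : ℝ)| + 1/2) := Finset.sum_le_sum (fun i _ => by
            have h1 := abs_sub_round (y i)
            have h2 := abs_add_le ((s i : ℝ)) (y i - (round (y i) : ℤ))
            linarith)
        _ = (∑ i, |(s i : ℝ)|) + d * (1/2) := by
            rw [Finset.sum_add_distrib, Finset.sum_const]
            simp [mul_comm]
        _ ≤ (k : ℝ) + d / 2 := by linarith
    · have : y - (fun i => (s i : ℝ) + (y i - (round (y i) : ℤ)))
          = ((fun i => ((round (y i) : ℤ) : ℝ)) - fun i => (s i : ℝ)) := by
        funext i; simp only [Pi.sub_apply]; ring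
      rw [this]; exact hs2
  · intro h y
    obtain ⟨s, hs0, hs1, hs2⟩ := h (fun i => ⌊y i⌋)
    refine ⟨fun i => (s i : ℝ) + (y i - (⌊y i⌋ : ℤ)), ?_, ?_, ?_⟩
    · intro i
      dsimp only
      have h1 := Int.floor_le (y i)
      have h2 : (0:ℝ) ≤ (s i : ℝ) := by exact_mod_cast hs0 i
      linarith
    · have hsum : (∑ i, (s i : ℝ)) ≤ (k : ℝ) := by exact_mod_cast hs1
      calc ∑ i, ((s i : ℝ) + (y i - (⌊y i⌋ : ℤ)))
          ≤ ∑ i, ((s i : ℝ) + 1) := Finset.sum_le_sum (fun i _ => by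
            have := Int.lt_floor_add_one (y i)
            push_cast
            linarith)
        _ = (∑ i, (s i : ℝ)) + d := by
            rw [Finset.sum_add_distrib, Finset.sum_const]; simp
        _ ≤ (k : ℝ) + d := by linarith
    · have : y - (fun i => (s i : ℝ) + (y i - (⌊y i⌋ : ℤ)))
          = ((fun i => ((⌊y i⌋ : ℤ) : ℝ)) - fun i => (s i : ℝ)) := by
        funext i; simp only [Pi.sub_apply]; ring
      rw [this]; exact hs2
end

section
/- Let L be a finite-index subgroup of ℤ^d and let m be a positive integer. (a) If S_{d,k} + L = ℤ^d, then S_{d, mk+⌊m/2⌋·d} + mL = ℤ^d, where mL = {m·v : v ∈ L}. (b) If S'_{d,k} + L = ℤ^d, then S'_{d, mk+(m−1)·d} + mL = ℤ^d. -/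
/-!
Write each coordinate of `x` as `x i = m * q i + r i` with a small remainder `r i` (balanced
for the ℓ¹-ball, non-negative for the simplex). Covering `q` by `S + L`, say `q - s ∈ L`, gives
`x - (m • s + r) = m • (q - s) ∈ mL`, and `m • s + r` lies in the `m`-fold dilate of `S`
enlarged by at most `d` times the largest remainder.
-/

open Finset

variable {ι : Type*}

theorem exists_sub_eq_smul_of_forall_sub_mem {L : AddSubgroup (ι → ℤ)} {P R : (ι → ℤ) → Prop}
    (m : ℤ) (hL : ∀ q, ∃ s, P s ∧ q - s ∈ L) (hR : ∀ x, ∃ q r, R r ∧ x = m • q + r)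
    (x : ι → ℤ) : ∃ s r, P s ∧ R r ∧ ∃ w ∈ L, x - (m • s + r) = m • w := by
  obtain ⟨q, r, hr, rfl⟩ := hR x
  obtain ⟨s, hs, hqs⟩ := hL q
  exact ⟨s, r, hs, hr, q - s, hqs, by rw [smul_sub]; abel⟩

theorem exists_eq_smul_add_abs_le {m : ℕ} (hm : 0 < m) (x : ι → ℤ) :
    ∃ q r : ι → ℤ, (∀ i, |r i| ≤ ((m / 2 : ℕ) : ℤ)) ∧ x = (m : ℤ) • q + r := by
  refine ⟨fun i => (x i).bdiv m, fun i => (x i).bmod m, fun i => ?_, ?_⟩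
  · have := Int.le_bmod (x := x i) hm
    have := Int.bmod_lt (x := x i) hm
    dsimp only
    rw [abs_le]
    omega
  · ext i
    exact (Int.bdiv_add_bmod (x i) m).symm

theorem exists_eq_smul_add_nonneg_le {m : ℕ} (hm : 0 < m) (x : ι → ℤ) :
    ∃ q r : ι → ℤ, (∀ i, 0 ≤ r i ∧ r i ≤ ((m - 1 : ℕ) : ℤ)) ∧ x = (m : ℤ) • q + r := by
  have hm' : (0 : ℤ) < m := by exact_mod_cast hm
  refine ⟨fun i => x i / m, fun i => x i % m, fun i => ?_, ?_⟩
  · have := Int.emod_lt_of_pos (x i) hm'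
    exact ⟨Int.emod_nonneg _ hm'.ne', by dsimp only; omega⟩
  · ext i
    exact (Int.mul_ediv_add_emod (x i) m).symm

variable [Fintype ι]

theorem sum_abs_smul_add_le (m : ℕ) (s r : ι → ℤ) :
    ∑ i, |((m : ℤ) • s + r) i| ≤ m * ∑ i, |s i| + ∑ i, |r i| := by
  rw [mul_sum, ← sum_add_distrib]
  refine sum_le_sum fun i _ => ?_
  calc |(m : ℤ) * s i + r i| ≤ |(m : ℤ) * s i| + |r i| := abs_add_le _ _
    _ = m * |s i| + |r i| := by rw [abs_mul, Nat.abs_cast]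

theorem sum_smul_add (m : ℤ) (s r : ι → ℤ) :
    ∑ i, (m • s + r) i = m * ∑ i, s i + ∑ i, r i := by
  simp only [Pi.add_apply, Pi.smul_apply, smul_eq_mul, sum_add_distrib, mul_sum]

theorem sum_le_card_mul_of_forall_le {r : ι → ℤ} {c : ℤ} (h : ∀ i, r i ≤ c) :
    ∑ i, r i ≤ Fintype.card ι * c := by
  simpa using sum_le_card_nsmul univ r c fun i _ => h i

theorem stmt4_general (d k m : ℕ) (hm : 0 < m) (L : AddSubgroup (Fin d → ℤ)) :
    ((∀ x : Fin d → ℤ, ∃ s : Fin d → ℤ, (∑ i, |s i|) ≤ (k : ℤ) ∧ x - s ∈ L) →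
      ∀ x : Fin d → ℤ, ∃ s : Fin d → ℤ,
        (∑ i, |s i|) ≤ ((m * k + (m / 2) * d : ℕ) : ℤ) ∧
        ∃ w ∈ L, x - s = (m : ℤ) • w) ∧
    ((∀ x : Fin d → ℤ, ∃ s : Fin d → ℤ, (∀ i, 0 ≤ s i) ∧ (∑ i, s i) ≤ (k : ℤ) ∧
        x - s ∈ L) →
      ∀ x : Fin d → ℤ, ∃ s : Fin d → ℤ, (∀ i, 0 ≤ s i) ∧
        (∑ i, s i) ≤ ((m * k + (m - 1) * d : ℕ) : ℤ) ∧
        ∃ w ∈ L, x - s = (m : ℤ) • w) := by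
  refine ⟨fun h x => ?_, fun h x => ?_⟩
  · obtain ⟨s, r, hs, hr, w, hw, hx⟩ :=
      exists_sub_eq_smul_of_forall_sub_mem (m : ℤ) h (exists_eq_smul_add_abs_le hm) x
    refine ⟨_, ?_, w, hw, hx⟩
    have hrsum := sum_le_card_mul_of_forall_le hr
    have hms := mul_le_mul_of_nonneg_left hs (Int.natCast_nonneg m)
    rw [Fintype.card_fin] at hrsum
    simp only [Nat.cast_add, Nat.cast_mul]
    linarith [sum_abs_smul_add_le m s r]
  · obtain ⟨s, r, ⟨hs0, hs⟩, hr, w, hw, hx⟩ :=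
      exists_sub_eq_smul_of_forall_sub_mem (P := fun s => (∀ i, 0 ≤ s i) ∧ ∑ i, s i ≤ k) m
        (fun q => (h q).imp fun _ hs => ⟨⟨hs.1, hs.2.1⟩, hs.2.2⟩)
        (exists_eq_smul_add_nonneg_le hm) x
    refine ⟨_, fun i => ?_, ?_, w, hw, hx⟩
    · simpa using add_nonneg (mul_nonneg (Int.natCast_nonneg m) (hs0 i)) (hr i).1
    · have hrsum := sum_le_card_mul_of_forall_le fun i => (hr i).2
      have hms := mul_le_mul_of_nonneg_left hs (Int.natCast_nonneg m)
      rw [Fintype.card_fin] at hrsum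
      rw [sum_smul_add]
      simp only [Nat.cast_add, Nat.cast_mul]
      linarith

/-- Let `L ≤ ℤ^d` be a finite-index subgroup and `m > 0`.
(a) If `S_{d,k} + L = ℤ^d` then `S_{d, mk+⌊m/2⌋d} + mL = ℤ^d`.
(b) If `S'_{d,k} + L = ℤ^d` then `S'_{d, mk+(m−1)d} + mL = ℤ^d`. -/
theorem stmt4 (d k m : ℕ) (hm : 0 < m) (L : AddSubgroup (Fin d → ℤ))
    (hfin : L.index ≠ 0) :
    ((∀ x : Fin d → ℤ, ∃ s : Fin d → ℤ, (∑ i, |s i|) ≤ (k : ℤ) ∧ x - s ∈ L) →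
      ∀ x : Fin d → ℤ, ∃ s : Fin d → ℤ,
        (∑ i, |s i|) ≤ ((m * k + (m / 2) * d : ℕ) : ℤ) ∧
        ∃ w ∈ L, x - s = (m : ℤ) • w) ∧
    ((∀ x : Fin d → ℤ, ∃ s : Fin d → ℤ, (∀ i, 0 ≤ s i) ∧ (∑ i, s i) ≤ (k : ℤ) ∧
        x - s ∈ L) →
      ∀ x : Fin d → ℤ, ∃ s : Fin d → ℤ, (∀ i, 0 ≤ s i) ∧
        (∑ i, s i) ≤ ((m * k + (m - 1) * d : ℕ) : ℤ) ∧
        ∃ w ∈ L, x - s = (m : ℤ) • w) :=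
  stmt4_general d k m hm L
end

section
/- Let S be a bounded subset of ℝ^d, let L be a lattice in ℝ^d with generating vectors v_1,…,v_d such that S + L = ℝ^d, and let δ be the metric induced by some norm on ℝ^d. Then there are positive real numbers η and ρ such that for every r ∈ (0,1): if v'_1,…,v'_d are vectors with δ(v_i, v'_i) < r·η for all i ≤ d, and L' is the lattice generated by v'_1,…,v'_d, and S⁺ is the set of points within δ-distance r·ρ of S, then S⁺ + L' = ℝ^d. -/
/-!
Write `L` and `L'` for the two lattices and measure everything with the seminorm `p` given by
`f`. By equivalence of norms on the coefficient space, a point `x = ∑ mᵢ vᵢ` of `L` has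
`∑ |mᵢ| ≤ K p x`, so replacing each `vᵢ` by `v'ᵢ` moves it to a point of `L'` at distance at
most `K ε p x`, where `ε` bounds `p (vᵢ - v'ᵢ)`. With `ε = r / (2K)` every point of `L` is
approximated by `L'` within `r/2` of its size. Covering by `S + L` then shows that each `y` can be
moved by `L'` to a point of size at most about half of its own plus `O(M)`, where `M` bounds `S`;
iterating brings `y` into a fixed ball modulo `L'`, and one last approximation lands it within
`O(r)` of `S`.
-/

open Set

theorem Seminorm.exists_pos_mul_norm_le {E : Type*} [NormedAddCommGroup E] [NormedSpace ℝ E]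
    [FiniteDimensional ℝ E] (p : Seminorm ℝ E) (hp : ∀ x, p x = 0 → x = 0) :
    ∃ c > 0, ∀ x, c * ‖x‖ ≤ p x := by
  rcases subsingleton_or_nontrivial E with hE | hE
  · exact ⟨1, one_pos, fun x => by simp [Subsingleton.elim x 0]⟩
  obtain ⟨z, hz, hmin⟩ := (isCompact_sphere (0 : E) 1).exists_isMinOn
    (NormedSpace.sphere_nonempty.2 zero_le_one) p.convexOn.locallyLipschitz.continuous.continuousOn
  have hz1 : ‖z‖ = 1 := by simpa using hz
  have hpz : 0 < p z := (apply_nonneg p z).lt_of_ne' fun h => by simp [hp z h] at hz1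
  refine ⟨p z, hpz, fun x => ?_⟩
  rcases eq_or_ne x 0 with rfl | hx
  · simp
  have hxn : 0 < ‖x‖ := norm_pos_iff.2 hx
  have : p z ≤ p (‖x‖⁻¹ • x) :=
    hmin (show ‖x‖⁻¹ • x ∈ Metric.sphere (0 : E) 1 by simp [norm_smul, hxn.ne'])
  rw [map_smul_eq_mul, norm_inv, norm_norm] at this
  rwa [le_inv_mul_iff₀ hxn, mul_comm] at this

theorem LinearIndependent.exists_sum_abs_le_mul_seminorm {ι E : Type*} [Fintype ι]
    [AddCommGroup E] [Module ℝ E] {v : ι → E} (hv : LinearIndependent ℝ v)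
    (p : Seminorm ℝ E) (hp : ∀ x, p x = 0 → x = 0) :
    ∃ K > 0, ∀ c : ι → ℝ, ∑ i, |c i| ≤ K * p (∑ i, c i • v i) := by
  have hq : ∀ c, p.comp (Fintype.linearCombination ℝ v) c = 0 → c = 0 := fun c hc =>
    funext (Fintype.linearIndependent_iff.1 hv c (hp _ hc))
  obtain ⟨c₀, hc₀, hle⟩ := (p.comp (Fintype.linearCombination ℝ v)).exists_pos_mul_norm_le hq
  refine ⟨(Fintype.card ι + 1) / c₀, by positivity, fun c => ?_⟩
  calc ∑ i, |c i| ≤ ∑ _i : ι, ‖c‖ := Finset.sum_le_sum fun i _ => norm_le_pi_norm c i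
    _ = Fintype.card ι * ‖c‖ := by simp
    _ ≤ (Fintype.card ι + 1) * ‖c‖ := by gcongr; linarith
    _ ≤ (Fintype.card ι + 1) / c₀ * p (∑ i, c i • v i) := by
      rw [div_mul_eq_mul_div, le_div_iff₀ hc₀, mul_assoc]
      gcongr
      simpa [Fintype.linearCombination_apply, mul_comm] using hle c

theorem Seminorm.exists_mem_closure_sub_le {ι E : Type*} [Fintype ι] [AddCommGroup E] [Module ℝ E]
    (p : Seminorm ℝ E) {v v' : ι → E} {K ε : ℝ}
    (hK : ∀ c : ι → ℝ, ∑ i, |c i| ≤ K * p (∑ i, c i • v i))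
    (hε₀ : 0 ≤ ε) (hε : ∀ i, p (v i - v' i) ≤ ε) {x : E}
    (hx : x ∈ AddSubgroup.closure (range v)) :
    ∃ w ∈ AddSubgroup.closure (range v'), p (x - w) ≤ K * ε * p x := by
  rw [← Submodule.span_int_eq_addSubgroupClosure, Submodule.mem_toAddSubgroup,
    Submodule.mem_span_range_iff_exists_fun] at hx
  obtain ⟨m, rfl⟩ := hx
  have hcast : ∀ u : ι → E, ∑ i, m i • u i = ∑ i, (m i : ℝ) • u i := fun u =>
    Finset.sum_congr rfl fun i _ => (Int.cast_smul_eq_zsmul ℝ (m i) (u i)).symm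
  refine ⟨∑ i, m i • v' i, sum_mem fun i _ =>
    AddSubgroup.zsmul_mem _ (AddSubgroup.subset_closure (mem_range_self i)) _, ?_⟩
  rw [hcast, hcast, ← Finset.sum_sub_distrib]
  calc p (∑ i, ((m i : ℝ) • v i - (m i : ℝ) • v' i))
      ≤ ∑ i, |(m i : ℝ)| * p (v i - v' i) := by
        simp only [← smul_sub, ← Real.norm_eq_abs, ← map_smul_eq_mul p]
        exact Finset.le_sum_of_subadditive p (map_zero p).le (map_add_le_add p) _ _
    _ ≤ (∑ i, |(m i : ℝ)|) * ε := by
        rw [Finset.sum_mul]; gcongr with i; exact hε i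
    _ ≤ K * ε * p (∑ i, (m i : ℝ) • v i) := by
        rw [mul_right_comm]; gcongr; exact hK _

theorem AddSubgroup.exists_apply_sub_le_of_descent {E : Type*} [AddCommGroup E] (L : AddSubgroup E)
    (g : E → ℝ) (B : ℝ) (hdesc : ∀ y, B < g y → ∃ w ∈ L, g (y - w) ≤ g y - 1) (y : E) :
    ∃ w ∈ L, g (y - w) ≤ B := by
  obtain ⟨n, hn⟩ := exists_nat_ge (g y - B)
  induction n generalizing y with
  | zero => exact ⟨0, L.zero_mem, by rw [sub_zero]; push_cast at hn; linarith⟩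
  | succ n ih =>
    by_cases hy : g y ≤ B
    · exact ⟨0, L.zero_mem, by simpa using hy⟩
    obtain ⟨w, hw, hgw⟩ := hdesc y (not_le.1 hy)
    obtain ⟨w', hw', hgw'⟩ := ih (y - w) (by push_cast at hn; linarith)
    exact ⟨w + w', L.add_mem hw hw', by rwa [sub_add_eq_sub_sub]⟩

theorem Seminorm.exists_sub_mem_near_of_approx {E : Type*} [AddCommGroup E] [Module ℝ E]
    (p : Seminorm ℝ E) {S : Set E} {M t : ℝ} (hM : ∀ x ∈ S, p x ≤ M) (ht₀ : 0 ≤ t)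
    (ht : t ≤ 1 / 2) {L L' : AddSubgroup E} (hcover : ∀ y, ∃ s ∈ S, y - s ∈ L)
    (happrox : ∀ x ∈ L, ∃ w ∈ L', p (x - w) ≤ t * p x) (y : E) :
    ∃ q, (∃ x ∈ S, p (q - x) ≤ t * (4 * M + 2)) ∧ y - q ∈ L' := by
  have hdesc : ∀ y, 3 * M + 2 < p y → ∃ w ∈ L', p (y - w) ≤ p y - 1 := by
    intro y hy
    obtain ⟨s, hs, hys⟩ := hcover y
    obtain ⟨w, hw, hpw⟩ := happrox _ hys
    have hhalf : t * p (y - s) ≤ p (y - s) / 2 := by nlinarith [apply_nonneg p (y - s)]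
    have htri : p (y - w) ≤ p (y - s - w) + p s := by
      simpa only [sub_right_comm y s w, sub_add_cancel] using map_add_le_add p (y - s - w) s
    refine ⟨w, hw, ?_⟩
    linarith [map_sub_le_add p y s, hM s hs]
  obtain ⟨w₁, hw₁, hpw₁⟩ := L'.exists_apply_sub_le_of_descent p _ hdesc y
  obtain ⟨s, hs, hys⟩ := hcover (y - w₁)
  obtain ⟨w₂, hw₂, hpw₂⟩ := happrox _ hys
  refine ⟨y - w₁ - w₂, ⟨s, hs, ?_⟩, by simpa [sub_sub] using L'.add_mem hw₁ hw₂⟩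
  calc p (y - w₁ - w₂ - s) = p (y - w₁ - s - w₂) := by rw [sub_right_comm]
    _ ≤ t * p (y - w₁ - s) := hpw₂
    _ ≤ t * (4 * M + 2) := by
      gcongr
      linarith [map_sub_le_add p (y - w₁) s, hM s hs]

/-- Let `S` be a bounded subset of `ℝ^d`, `L` the lattice generated by
linearly independent vectors `v 1, …, v d` with `S + L = ℝ^d`, and `δ(x,y) = f (x-y)`
the metric induced by a norm `f`. Then there are `η, ρ > 0` such that for all
`r ∈ (0,1)`: if `δ(v i, v' i) < r·η` for all `i` and `L'` is the lattice generated by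
the `v' i`, then `S⁺ + L' = ℝ^d`, where `S⁺` is the set of points within `δ`-distance
`r·ρ` of `S`. -/
theorem stmt6 (d : ℕ) (S : Set (Fin d → ℝ))
    (v : Fin d → (Fin d → ℝ)) (hv : LinearIndependent ℝ v)
    (f : (Fin d → ℝ) → ℝ)
    (hf0 : ∀ x, f x = 0 ↔ x = 0)
    (hfsmul : ∀ (a : ℝ) (x : Fin d → ℝ), f (a • x) = |a| * f x)
    (hftri : ∀ x y : Fin d → ℝ, f (x + y) ≤ f x + f y)
    (hbdd : ∃ M : ℝ, ∀ x ∈ S, f x ≤ M)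
    (hcover : ∀ y : Fin d → ℝ, ∃ s ∈ S, y - s ∈ AddSubgroup.closure (Set.range v)) :
    ∃ η > (0 : ℝ), ∃ ρ > (0 : ℝ), ∀ r : ℝ, 0 < r → r < 1 →
      ∀ v' : Fin d → (Fin d → ℝ), (∀ i, f (v i - v' i) < r * η) →
        ∀ y : Fin d → ℝ, ∃ p : Fin d → ℝ, (∃ x ∈ S, f (p - x) ≤ r * ρ) ∧
          y - p ∈ AddSubgroup.closure (Set.range v') := by
  let p : Seminorm ℝ (Fin d → ℝ) :=
    Seminorm.of f hftri (by simpa only [Real.norm_eq_abs] using hfsmul)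
  obtain ⟨K, hK, hKv⟩ := hv.exists_sum_abs_le_mul_seminorm p fun x => (hf0 x).1
  obtain ⟨M, hM⟩ := hbdd
  refine ⟨1 / (2 * K), by positivity, 2 * max M 0 + 1, by positivity,
    fun r hr₀ hr₁ v' hv' y => ?_⟩
  have happrox : ∀ x ∈ AddSubgroup.closure (range v),
      ∃ w ∈ AddSubgroup.closure (range v'), p (x - w) ≤ r / 2 * p x := fun x hx => by
    simpa [field] using p.exists_mem_closure_sub_le hKv (by positivity) (fun i => (hv' i).le) hx
  obtain ⟨q, ⟨x, hx, hqx⟩, hyq⟩ :=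
    p.exists_sub_mem_near_of_approx (fun x hx => (hM x hx).trans (le_max_left M 0))
      (by positivity) (by linarith) hcover happrox y
  exact ⟨q, ⟨x, hx, hqx.trans_eq (by ring)⟩, hyq⟩
end

section
/- Suppose L is a lattice in ℝ^d with generating vectors v_1,…,v_d such that B_{d,k} + L = ℝ^d. Then there is a constant c such that for all sufficiently large real numbers t the following holds: if w_i ∈ ℤ^d is obtained from t·v_i by rounding each coordinate to the nearest integer, and L̄ is the lattice generated by w_1,…,w_d, then B_{d, tk+c} + L̄ = ℝ^d. The same statement holds with the simplices T_{d,k} and T_{d, tk+c} in place of B_{d,k} and B_{d, tk+c}. -/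
/-!
Write `w_t i` for `t • v i` rounded coordinatewise and `L̄_t` for the lattice they generate.
Since `t⁻¹ • w_t → v`, the `w_t` are eventually independent, so every `y` is congruent
modulo `L̄_t` to a point `y'` of a fundamental parallelepiped, of norm `O(t)`. Covering
`t⁻¹ • y'` by `C + L` gives `y' = t • b + t • x` with `b ∈ C` and `x = ∑ nᵢ • vᵢ ∈ L` of norm
`O(1)`, hence with integer coefficients `nᵢ = O(1)`. Replacing each `t • vᵢ` by `w_t i` moves
`t • x` into `L̄_t` at a cost of at most `∑ |nᵢ| / 2 = O(1)` per coordinate. Thus `t • C`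
thickened by a box of fixed size covers modulo `L̄_t`; for the simplex, translate the box into
the positive orthant.
-/

open Filter Topology Pointwise

section

variable {ι : Type*} [Fintype ι]

noncomputable def roundSmul (t : ℝ) (x : ι → ℝ) : ι → ℝ := fun j => (round (t * x j) : ℝ)

lemma norm_smul_sub_roundSmul_le (t : ℝ) (x : ι → ℝ) : ‖t • x - roundSmul t x‖ ≤ 1 / 2 :=
  (pi_norm_le_iff_of_nonneg (by norm_num)).2 fun j => by
    simpa [roundSmul, Real.norm_eq_abs, abs_sub_comm] using abs_sub_round (t * x j)

lemma norm_roundSmul_le {t : ℝ} (ht : 0 ≤ t) (x : ι → ℝ) :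
    ‖roundSmul t x‖ ≤ t * ‖x‖ + 1 / 2 := by
  calc ‖roundSmul t x‖ ≤ ‖t • x‖ + ‖t • x - roundSmul t x‖ := norm_le_norm_add_norm_sub _ _
    _ ≤ t * ‖x‖ + 1 / 2 := by
      rw [norm_smul, Real.norm_of_nonneg ht]
      gcongr
      exact norm_smul_sub_roundSmul_le t x

lemma tendsto_inv_smul_roundSmul (x : ι → ℝ) :
    Tendsto (fun t => t⁻¹ • roundSmul t x) atTop (𝓝 x) := by
  rw [tendsto_iff_norm_sub_tendsto_zero]
  refine squeeze_zero' (Eventually.of_forall fun _ => norm_nonneg _)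
    ((eventually_gt_atTop 0).mono fun t ht => ?_)
    (by simpa using tendsto_inv_atTop_zero.const_mul (1 / 2 : ℝ))
  calc ‖t⁻¹ • roundSmul t x - x‖ = t⁻¹ * ‖t • x - roundSmul t x‖ := by
        have : t⁻¹ • roundSmul t x - x = -(t⁻¹ • (t • x - roundSmul t x)) := by
          rw [smul_sub, inv_smul_smul₀ ht.ne', neg_sub]
        rw [this, norm_neg, norm_smul, Real.norm_of_nonneg (inv_nonneg.2 ht.le)]
    _ ≤ t⁻¹ * (1 / 2) := by gcongr; exact norm_smul_sub_roundSmul_le t x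
    _ = 2⁻¹ * t⁻¹ := by ring

lemma eventually_linearIndependent_roundSmul {v : ι → ι → ℝ} (hv : LinearIndependent ℝ v) :
    ∀ᶠ t in atTop, LinearIndependent ℝ fun i => roundSmul t (v i) := by
  have hlim : Tendsto (fun t i => t⁻¹ • roundSmul t (v i)) atTop (𝓝 v) :=
    tendsto_pi_nhds.2 fun i => tendsto_inv_smul_roundSmul (v i)
  filter_upwards [hlim.eventually hv.eventually, eventually_ne_atTop 0] with t ht ht0
  exact (LinearIndependent.units_smul_iff _ fun _ => Units.mk0 t⁻¹ (inv_ne_zero ht0)).1 ht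

lemma norm_le_sum_abs (b : ι → ℝ) : ‖b‖ ≤ ∑ i, |b i| :=
  (pi_norm_le_iff_of_nonneg (by positivity)).2 fun i =>
    Finset.single_le_sum (f := fun i => |b i|) (fun i _ => abs_nonneg (b i)) (Finset.mem_univ i)

lemma sum_abs_le_card_mul_norm (b : ι → ℝ) : ∑ i, |b i| ≤ Fintype.card ι * ‖b‖ := by
  simpa using Finset.sum_le_card_nsmul Finset.univ (fun i => |b i|) ‖b‖
    fun i _ => norm_le_pi_norm b i

lemma Module.Basis.exists_sum_abs_le_norm_sum_smul {E : Type*} [NormedAddCommGroup E]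
    [NormedSpace ℝ E] (b : Module.Basis ι ℝ E) :
    ∃ A, 0 ≤ A ∧ ∀ c : ι → ℝ, ∑ i, |c i| ≤ A * ‖∑ i, c i • b i‖ := by
  set e : E →L[ℝ] ι → ℝ := b.equivFunL.toContinuousLinearMap
  refine ⟨Fintype.card ι * ‖e‖, by positivity, fun c => ?_⟩
  have hc : e (∑ i, c i • b i) = c := by
    rw [← b.equivFun_symm_apply]; exact b.equivFunL.apply_symm_apply c
  calc ∑ i, |c i| ≤ Fintype.card ι * ‖c‖ := sum_abs_le_card_mul_norm c
    _ ≤ Fintype.card ι * (‖e‖ * ‖∑ i, c i • b i‖) := by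
        gcongr
        conv_lhs => rw [← hc]
        exact e.le_opNorm _
    _ = _ := (mul_assoc _ _ _).symm

lemma LinearIndependent.exists_sub_mem_closure_norm_le {w : ι → ι → ℝ}
    (hw : LinearIndependent ℝ w) (y : ι → ℝ) :
    ∃ z ∈ AddSubgroup.closure (Set.range w), ‖y - z‖ ≤ ∑ i, ‖w i‖ := by
  let b := basisOfLinearIndependentOfCardEqFinrank' w hw (by simp)
  have hb : ⇑b = w := coe_basisOfLinearIndependentOfCardEqFinrank' w hw _
  refine ⟨ZSpan.floor b y, ?_, ?_⟩
  · rw [← Submodule.span_int_eq_addSubgroupClosure, Submodule.mem_toAddSubgroup, ← hb]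
    exact (ZSpan.floor b y).2
  · simpa only [hb, ZSpan.fract_apply] using ZSpan.norm_fract_le b y

lemma norm_smul_sum_zsmul_sub_sum_zsmul_le {E : Type*} [NormedAddCommGroup E] [NormedSpace ℝ E]
    {t δ : ℝ} {v w : ι → E} (h : ∀ i, ‖t • v i - w i‖ ≤ δ) (n : ι → ℤ) :
    ‖t • ∑ i, n i • v i - ∑ i, n i • w i‖ ≤ δ * ∑ i, |(n i : ℝ)| := by
  have hsum : t • ∑ i, n i • v i - ∑ i, n i • w i = ∑ i, (n i : ℝ) • (t • v i - w i) := by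
    simp only [Finset.smul_sum, ← Finset.sum_sub_distrib, smul_sub, smul_comm t,
      Int.cast_smul_eq_zsmul]
  rw [hsum, Finset.mul_sum]
  refine norm_sum_le_of_le _ fun i _ => ?_
  rw [norm_smul, Real.norm_eq_abs, mul_comm]
  gcongr
  exact h i

def Covers {E : Type*} [AddGroup E] (S : Set E) (L : AddSubgroup E) : Prop :=
  ∀ y, ∃ b ∈ S, y - b ∈ L

lemma Covers.mono {E : Type*} [AddGroup E] {S T : Set E} {L : AddSubgroup E} (hST : S ⊆ T)
    (hS : Covers S L) : Covers T L := fun y =>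
  let ⟨b, hb, hyb⟩ := hS y
  ⟨b, hST hb, hyb⟩

lemma Covers.vadd {E : Type*} [AddCommGroup E] {S : Set E} {L : AddSubgroup E}
    (hS : Covers S L) (a : E) : Covers (a +ᵥ S) L := fun y =>
  let ⟨b, hb, hyb⟩ := hS (y - a)
  ⟨a + b, Set.vadd_mem_vadd_set hb, by rwa [sub_add_eq_sub_sub]⟩

lemma Covers.eventually_roundSmul {v : ι → ι → ℝ} (hv : LinearIndependent ℝ v)
    {C : Set (ι → ℝ)} (hC : Bornology.IsBounded C)
    (hcov : Covers C (AddSubgroup.closure (Set.range v))) :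
    ∃ ε, ∀ᶠ t in atTop, Covers (t • C + Metric.closedBall 0 ε)
      (AddSubgroup.closure (Set.range fun i => roundSmul t (v i))) := by
  obtain ⟨k, hk⟩ := hC.exists_norm_le
  obtain ⟨A, hA0, hA⟩ :=
    (basisOfLinearIndependentOfCardEqFinrank' v hv (by simp)).exists_sum_abs_le_norm_sum_smul
  simp only [coe_basisOfLinearIndependentOfCardEqFinrank'] at hA
  set S := ∑ i, ‖v i‖
  set K := S + 1 + k
  refine ⟨A * K / 2, ?_⟩
  filter_upwards [eventually_linearIndependent_roundSmul hv, eventually_gt_atTop 0,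
    eventually_ge_atTop (Fintype.card ι / 2 : ℝ)] with t hw ht htcard y
  obtain ⟨z₀, hz₀, hyz₀⟩ := hw.exists_sub_mem_closure_norm_le y
  have hyz₀S : ‖y - z₀‖ ≤ t * S + Fintype.card ι / 2 :=
    calc ‖y - z₀‖ ≤ ∑ i, (t * ‖v i‖ + 1 / 2) :=
          hyz₀.trans (Finset.sum_le_sum fun i _ => norm_roundSmul_le ht.le (v i))
      _ = t * S + Fintype.card ι / 2 := by
          rw [Finset.sum_add_distrib, ← Finset.mul_sum]
          simp only [Finset.sum_const, Finset.card_univ, nsmul_eq_mul]; ring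
  obtain ⟨b, hbC, hx⟩ := hcov (t⁻¹ • (y - z₀))
  set x := t⁻¹ • (y - z₀) - b with hxdef
  have hxK : ‖x‖ ≤ K := by
    have hcard : (Fintype.card ι / 2 : ℝ) / t ≤ 1 := (div_le_one ht).2 htcard
    calc ‖x‖ ≤ t⁻¹ * ‖y - z₀‖ + ‖b‖ := by
          refine (norm_sub_le _ _).trans ?_
          rw [norm_smul, Real.norm_of_nonneg (inv_nonneg.2 ht.le)]
      _ ≤ t⁻¹ * (t * S + Fintype.card ι / 2) + k := by gcongr; exact hk b hbC
      _ = S + (Fintype.card ι / 2 : ℝ) / t + k := by field_simp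
      _ ≤ K := by linarith
  obtain ⟨n, hn⟩ := AddSubgroup.mem_closure_range_iff_of_fintype.1 hx
  set z₁ := ∑ i, n i • roundSmul t (v i)
  refine ⟨t • b + (t • x - z₁), Set.add_mem_add (Set.smul_mem_smul_set hbC) ?_, ?_⟩
  · rw [mem_closedBall_zero_iff]
    have hnx : ∑ i, |(n i : ℝ)| ≤ A * ‖x‖ := by
      simpa only [Int.cast_smul_eq_zsmul, ← hn] using hA fun i => (n i : ℝ)
    calc ‖t • x - z₁‖ ≤ 1 / 2 * ∑ i, |(n i : ℝ)| := by
          rw [hn]; exact norm_smul_sum_zsmul_sub_sum_zsmul_le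
            (fun i => norm_smul_sub_roundSmul_le t (v i)) n
      _ ≤ 1 / 2 * (A * K) := by gcongr; exact hnx.trans (by gcongr)
      _ = A * K / 2 := by ring
  · have hy : y - (t • b + (t • x - z₁)) = z₀ + z₁ := by
      rw [hxdef, smul_sub, smul_inv_smul₀ ht.ne']; abel
    rw [hy]
    exact add_mem hz₀ (AddSubgroup.mem_closure_range_iff_of_fintype.2 ⟨n, rfl⟩)

def l1Ball (r : ℝ) : Set (ι → ℝ) := {b | ∑ i, |b i| ≤ r}

def cornerSimplex (r : ℝ) : Set (ι → ℝ) := {b | (∀ i, 0 ≤ b i) ∧ ∑ i, b i ≤ r}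

lemma isBounded_l1Ball (r : ℝ) : Bornology.IsBounded (l1Ball r : Set (ι → ℝ)) :=
  isBounded_iff_forall_norm_le.2 ⟨r, fun b hb => (norm_le_sum_abs b).trans hb⟩

lemma cornerSimplex_subset_l1Ball (r : ℝ) : (cornerSimplex r : Set (ι → ℝ)) ⊆ l1Ball r :=
  fun b ⟨hb0, hbr⟩ => by
    show ∑ i, |b i| ≤ r
    simpa only [abs_of_nonneg (hb0 _)] using hbr

lemma smul_l1Ball_add_closedBall_subset {t : ℝ} (ht : 0 ≤ t) (k ε : ℝ) :
    t • l1Ball k + Metric.closedBall 0 ε ⊆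
      (l1Ball (t * k + Fintype.card ι * ε) : Set (ι → ℝ)) := by
  rintro _ ⟨_, ⟨b, hb, rfl⟩, e, he, rfl⟩
  rw [mem_closedBall_zero_iff] at he
  calc ∑ i, |t * b i + e i| ≤ ∑ i, (t * |b i| + |e i|) := by
        gcongr with i
        exact (abs_add_le _ _).trans_eq (by rw [abs_mul, abs_of_nonneg ht])
    _ ≤ t * k + Fintype.card ι * ε := by
        rw [Finset.sum_add_distrib, ← Finset.mul_sum]
        gcongr
        · exact hb
        · exact (sum_abs_le_card_mul_norm e).trans (by gcongr)

lemma const_vadd_smul_cornerSimplex_add_closedBall_subset {t : ℝ} (ht : 0 ≤ t) (k ε : ℝ) :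
    (fun _ : ι => ε) +ᵥ (t • cornerSimplex k + Metric.closedBall 0 ε) ⊆
      (cornerSimplex (t * k + 2 * Fintype.card ι * ε) : Set (ι → ℝ)) := by
  rintro _ ⟨_, ⟨_, ⟨b, ⟨hb0, hbk⟩, rfl⟩, e, he, rfl⟩, rfl⟩
  rw [mem_closedBall_zero_iff] at he
  have hei : ∀ i, |e i| ≤ ε := fun i => (norm_le_pi_norm e i).trans he
  refine ⟨fun i => ?_, ?_⟩
  · have := (abs_le.1 (hei i)).1
    have := mul_nonneg ht (hb0 i)
    simp only [vadd_eq_add, Pi.add_apply, Pi.smul_apply, smul_eq_mul]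
    linarith
  · calc ∑ i, (ε + (t * b i + e i)) ≤ ∑ i, (2 * ε + t * b i) :=
          Finset.sum_le_sum fun i _ => by linarith [(abs_le.1 (hei i)).2]
      _ = 2 * Fintype.card ι * ε + t * ∑ i, b i := by
          rw [Finset.sum_add_distrib, Finset.mul_sum]
          simp only [Finset.sum_const, Finset.card_univ, nsmul_eq_mul]; ring
      _ ≤ t * k + 2 * Fintype.card ι * ε := by linarith [mul_le_mul_of_nonneg_left hbk ht]

end

theorem stmt7_general (d : ℕ) (k : ℝ)
    (v : Fin d → (Fin d → ℝ)) (hv : LinearIndependent ℝ v) :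
    ((∀ y : Fin d → ℝ, ∃ b : Fin d → ℝ, (∑ i, |b i|) ≤ k ∧
        y - b ∈ AddSubgroup.closure (Set.range v)) →
      ∃ c : ℝ, ∃ t₀ : ℝ, ∀ t : ℝ, t₀ ≤ t →
        ∀ y : Fin d → ℝ, ∃ b : Fin d → ℝ, (∑ i, |b i|) ≤ t * k + c ∧
          y - b ∈ AddSubgroup.closure
            (Set.range fun i => fun j => ((round (t * v i j) : ℤ) : ℝ))) ∧
    ((∀ y : Fin d → ℝ, ∃ b : Fin d → ℝ, (∀ i, 0 ≤ b i) ∧ (∑ i, b i) ≤ k ∧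
        y - b ∈ AddSubgroup.closure (Set.range v)) →
      ∃ c : ℝ, ∃ t₀ : ℝ, ∀ t : ℝ, t₀ ≤ t →
        ∀ y : Fin d → ℝ, ∃ b : Fin d → ℝ, (∀ i, 0 ≤ b i) ∧ (∑ i, b i) ≤ t * k + c ∧
          y - b ∈ AddSubgroup.closure
            (Set.range fun i => fun j => ((round (t * v i j) : ℤ) : ℝ))) := by
  constructor
  · intro hcov
    obtain ⟨ε, hε⟩ := Covers.eventually_roundSmul hv (isBounded_l1Ball k) hcov
    obtain ⟨t₀, ht₀⟩ := eventually_atTop.1 (hε.and (eventually_ge_atTop 0))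
    exact ⟨_, t₀, fun t ht =>
      (ht₀ t ht).1.mono (smul_l1Ball_add_closedBall_subset (ht₀ t ht).2 k ε)⟩
  · intro hcov
    have hcov' : Covers (cornerSimplex k) (AddSubgroup.closure (Set.range v)) := fun y =>
      let ⟨b, hb0, hbk, hyb⟩ := hcov y
      ⟨b, ⟨hb0, hbk⟩, hyb⟩
    obtain ⟨ε, hε⟩ := Covers.eventually_roundSmul hv
      ((isBounded_l1Ball k).subset (cornerSimplex_subset_l1Ball k)) hcov'
    obtain ⟨t₀, ht₀⟩ := eventually_atTop.1 (hε.and (eventually_ge_atTop 0))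
    refine ⟨2 * Fintype.card (Fin d) * ε, t₀, fun t ht y => ?_⟩
    obtain ⟨b, ⟨hb0, hbk⟩, hyb⟩ := ((ht₀ t ht).1.vadd fun _ => ε).mono
      (const_vadd_smul_cornerSimplex_add_closedBall_subset (ht₀ t ht).2 k ε) y
    exact ⟨b, hb0, hbk, hyb⟩

/-- Suppose the lattice `L` generated by linearly independent vectors
`v 1, …, v d` satisfies `B_{d,k} + L = ℝ^d`. Then there is a constant `c` such that
for all sufficiently large `t`, the lattice `L̄` generated by the vectors `w i`
obtained from `t • v i` by rounding each coordinate to the nearest integer satisfies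
`B_{d,tk+c} + L̄ = ℝ^d`; and likewise for the simplices `T_{d,k}`, `T_{d,tk+c}`. -/
theorem stmt7 (d : ℕ) (k : ℝ) (hk : 0 ≤ k)
    (v : Fin d → (Fin d → ℝ)) (hv : LinearIndependent ℝ v) :
    ((∀ y : Fin d → ℝ, ∃ b : Fin d → ℝ, (∑ i, |b i|) ≤ k ∧
        y - b ∈ AddSubgroup.closure (Set.range v)) →
      ∃ c : ℝ, ∃ t₀ : ℝ, ∀ t : ℝ, t₀ ≤ t →
        ∀ y : Fin d → ℝ, ∃ b : Fin d → ℝ, (∑ i, |b i|) ≤ t * k + c ∧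
          y - b ∈ AddSubgroup.closure
            (Set.range fun i => fun j => ((round (t * v i j) : ℤ) : ℝ))) ∧
    ((∀ y : Fin d → ℝ, ∃ b : Fin d → ℝ, (∀ i, 0 ≤ b i) ∧ (∑ i, b i) ≤ k ∧
        y - b ∈ AddSubgroup.closure (Set.range v)) →
      ∃ c : ℝ, ∃ t₀ : ℝ, ∀ t : ℝ, t₀ ≤ t →
        ∀ y : Fin d → ℝ, ∃ b : Fin d → ℝ, (∀ i, 0 ≤ b i) ∧ (∑ i, b i) ≤ t * k + c ∧
          y - b ∈ AddSubgroup.closure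
            (Set.range fun i => fun j => ((round (t * v i j) : ℤ) : ℝ))) :=
  stmt7_general d k v hv
end

section
/- For every natural number k, the largest possible cardinality of a finite abelian group G possessing two generators g_1, g_2 such that every element of G can be written as a_1 g_1 + a_2 g_2 with integers a_1, a_2 satisfying |a_1| + |a_2| ≤ k is exactly 2k² + 2k + 1. Equivalently, the maximum of [ℤ² : L] over finite-index subgroups L ≤ ℤ² with S_{2,k} + L = ℤ² equals 2k² + 2k + 1, and this maximum is attained. -/
/-!
The diamond `S_k = {s ∈ ℤ² : |s₀| + |s₁| ≤ k}` tiles `ℤ²` by the lattice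
`L = ker (s ↦ s₀ + (2k+1) s₁ mod 2k²+2k+1)`, spanned by `(k+1, k)` and `(-k, k+1)`: every class
of `ℤ² ⧸ L ≅ ZMod (2k²+2k+1)` has exactly one representative in `S_k`. So `|S_k| = 2k²+2k+1`;
a group generated with diameter at most `k` is an image of `S_k`, hence no larger, and
`ZMod (2k²+2k+1)` with generators `1, 2k+1` attains the bound.
-/

theorem eq_zero_of_dvd_of_abs_add_abs_le {K u v : ℤ} (huv : |u| + |v| ≤ 2 * K)
    (hdvd : 2 * K ^ 2 + 2 * K + 1 ∣ u + (2 * K + 1) * v) : u = 0 ∧ v = 0 := by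
  obtain ⟨m, hm⟩ := hdvd
  have hu := abs_nonneg u
  have hv := abs_nonneg v
  have hn : 0 < 2 * K ^ 2 + 2 * K + 1 := by nlinarith
  have hc : |u + (2 * K + 1) * v| = (2 * K ^ 2 + 2 * K + 1) * |m| := by
    rw [hm, abs_mul, abs_of_pos hn]
  have hup := abs_add_le u ((2 * K + 1) * v)
  have hlow : |(2 * K + 1) * v| ≤ |u + (2 * K + 1) * v| + |u| := by
    simpa using abs_sub (u + (2 * K + 1) * v) u
  rw [abs_mul, abs_of_nonneg (by linarith : (0 : ℤ) ≤ 2 * K + 1)] at hup hlow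
  rcases eq_or_ne m 0 with rfl | hm0
  · rw [abs_zero, mul_zero] at hc
    obtain rfl : v = 0 := abs_eq_zero.mp (by nlinarith)
    exact ⟨by simpa using hm, rfl⟩
  · -- `m ≠ 0` forces `|v| > K`, hence `|m| = 1`, and then `|u| < K` is too small to bridge the
    -- gap between `(2K+1)|v|` and the modulus.
    have hm1 : 1 ≤ |m| := Int.one_le_abs hm0
    have hvK : K + 1 ≤ |v| := by nlinarith
    have hm2 : |m| < 2 := by nlinarith
    rw [show |m| = 1 by omega] at hc
    nlinarith

theorem exists_abs_add_abs_le_dvd_sub {K q a : ℤ} (hq : 0 ≤ q) (hqK : q ≤ K) (ha : |a| ≤ K) :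
    ∃ a' b' : ℤ, |a'| + |b'| ≤ K ∧
      2 * K ^ 2 + 2 * K + 1 ∣ a + (2 * K + 1) * q - (a' + (2 * K + 1) * b') := by
  rcases le_or_gt (|a| + q) K with h | h
  · exact ⟨a, q, by rwa [abs_of_nonneg hq], ⟨0, by ring⟩⟩
  -- Otherwise subtract `(K + 1, K)` or `(-K, K + 1)`, which both lie in the lattice.
  rcases abs_cases a with ⟨ha', ha0⟩ | ⟨ha', ha0⟩
  · refine ⟨a - (K + 1), q - K, ?_, ⟨1, by ring⟩⟩
    rw [abs_of_neg (by linarith), abs_of_nonpos (by linarith)]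
    linarith
  · refine ⟨a + K, q - (K + 1), ?_, ⟨1, by ring⟩⟩
    rw [abs_of_nonneg (by linarith), abs_of_neg (by linarith)]
    linarith

def diamond (k : ℕ) : Set (Fin 2 → ℤ) := {s | ∑ i, |s i| ≤ k}

theorem mem_diamond {k : ℕ} {s : Fin 2 → ℤ} : s ∈ diamond k ↔ |s 0| + |s 1| ≤ k := by
  rw [diamond, Set.mem_ofPred_eq, Fin.sum_univ_two]

def diamondTilingHom (k : ℕ) : (Fin 2 → ℤ) →+ ZMod (2 * k ^ 2 + 2 * k + 1) :=
  AddMonoidHom.mk' (fun s => ((s 0 + (2 * k + 1) * s 1 : ℤ) : ZMod _))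
    (fun s t => by simp only [Pi.add_apply]; push_cast; ring)

theorem diamondTilingHom_apply (k : ℕ) (s : Fin 2 → ℤ) :
    diamondTilingHom k s = ((s 0 + (2 * k + 1) * s 1 : ℤ) : ZMod _) :=
  rfl

theorem injOn_diamondTilingHom (k : ℕ) : Set.InjOn (diamondTilingHom k) (diamond k) := by
  intro s hs t ht h
  rw [mem_diamond] at hs ht
  rw [diamondTilingHom_apply, diamondTilingHom_apply,
    ZMod.intCast_eq_intCast_iff_dvd_sub] at h
  obtain ⟨h0, h1⟩ := eq_zero_of_dvd_of_abs_add_abs_le (K := k) (u := t 0 - s 0) (v := t 1 - s 1)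
    (by linarith [abs_sub (t 0) (s 0), abs_sub (t 1) (s 1)])
    (by push_cast at h; convert h using 1; ring)
  ext i
  fin_cases i <;> simp <;> omega

theorem surjOn_diamondTilingHom (k : ℕ) :
    Set.SurjOn (diamondTilingHom k) (diamond k) Set.univ := by
  intro z _
  have hr : z.val < 2 * k ^ 2 + 2 * k + 1 := ZMod.val_lt z
  have hq : (z.val + k) / (2 * k + 1) ≤ k :=
    Nat.lt_succ_iff.mp (Nat.div_lt_of_lt_mul (by nlinarith))
  have hc := Nat.mod_lt (z.val + k) (show 0 < 2 * k + 1 by omega)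
  have hdiv : (z.val : ℤ) + k = (2 * k + 1) * ((z.val + k) / (2 * k + 1) : ℕ)
      + ((z.val + k) % (2 * k + 1) : ℕ) := by
    exact_mod_cast (Nat.div_add_mod (z.val + k) (2 * k + 1)).symm
  obtain ⟨a, b, hab, hdvd⟩ := exists_abs_add_abs_le_dvd_sub (K := k)
    (q := ((z.val + k) / (2 * k + 1) : ℕ)) (a := ((z.val + k) % (2 * k + 1) : ℕ) - k)
    (by positivity) (by exact_mod_cast hq) (abs_le.mpr ⟨by omega, by omega⟩)
  refine ⟨![a, b], mem_diamond.mpr hab, ?_⟩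
  rw [diamondTilingHom_apply, ← ZMod.natCast_zmod_val z, ← Int.cast_natCast (R := ZMod _) z.val,
    ZMod.intCast_eq_intCast_iff_dvd_sub]
  push_cast
  convert hdvd using 1
  linear_combination hdiv

theorem Nat.card_diamond (k : ℕ) : Nat.card (diamond k) = 2 * k ^ 2 + 2 * k + 1 := by
  rw [Nat.card_eq_of_bijective _ ⟨(injOn_diamondTilingHom k).injective,
    (Set.surjOn_iff_surjective.mp (surjOn_diamondTilingHom k))⟩, Nat.card_zmod]

theorem natCard_le_of_forall_eq_zsmul_add_zsmul {G : Type*} [AddGroup G] (k : ℕ) (g₁ g₂ : G)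
    (h : ∀ a : G, ∃ a₁ a₂ : ℤ, |a₁| + |a₂| ≤ (k : ℤ) ∧ a = a₁ • g₁ + a₂ • g₂) :
    Nat.card G ≤ 2 * k ^ 2 + 2 * k + 1 := by
  have : Finite (diamond k) := Nat.finite_of_card_ne_zero (by rw [Nat.card_diamond]; omega)
  rw [← Nat.card_diamond]
  refine Nat.card_le_card_of_surjective (fun s : diamond k => s.1 0 • g₁ + s.1 1 • g₂) ?_
  intro a
  obtain ⟨a₁, a₂, hle, rfl⟩ := h a
  exact ⟨⟨![a₁, a₂], mem_diamond.mpr hle⟩, rfl⟩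

theorem diamondTilingHom_surjective (k : ℕ) : Function.Surjective (diamondTilingHom k) :=
  fun z => (surjOn_diamondTilingHom k (Set.mem_univ z)).imp fun _ h => h.2

theorem index_ker_diamondTilingHom (k : ℕ) :
    (diamondTilingHom k).ker.index = 2 * k ^ 2 + 2 * k + 1 := by
  rw [AddSubgroup.index_ker, AddMonoidHom.range_eq_top.mpr (diamondTilingHom_surjective k),
    AddSubgroup.card_top, Nat.card_zmod]

theorem exists_mem_diamond_sub_mem_ker (k : ℕ) (x : Fin 2 → ℤ) :
    ∃ s ∈ diamond k, x - s ∈ (diamondTilingHom k).ker := by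
  obtain ⟨s, hs, h⟩ := surjOn_diamondTilingHom k (Set.mem_univ (diamondTilingHom k x))
  exact ⟨s, hs, by rw [AddMonoidHom.mem_ker, map_sub, h, sub_self]⟩

theorem exists_eq_zsmul_one_add_zsmul (k : ℕ) (z : ZMod (2 * k ^ 2 + 2 * k + 1)) :
    ∃ a₁ a₂ : ℤ, |a₁| + |a₂| ≤ (k : ℤ) ∧
      z = a₁ • (1 : ZMod _) + a₂ • ((2 * k + 1 : ℤ) : ZMod _) := by
  obtain ⟨s, hs, rfl⟩ := surjOn_diamondTilingHom k (Set.mem_univ z)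
  refine ⟨s 0, s 1, mem_diamond.mp hs, ?_⟩
  simp only [diamondTilingHom_apply, zsmul_eq_mul]
  push_cast
  ring

theorem natCard_quotient_le {k : ℕ} {L : AddSubgroup (Fin 2 → ℤ)}
    (hL : ∀ x : Fin 2 → ℤ, ∃ s : Fin 2 → ℤ, (∑ i, |s i|) ≤ (k : ℤ) ∧ x - s ∈ L) :
    Nat.card ((Fin 2 → ℤ) ⧸ L) ≤ 2 * k ^ 2 + 2 * k + 1 := by
  refine natCard_le_of_forall_eq_zsmul_add_zsmul k (QuotientAddGroup.mk (Pi.single 0 1))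
    (QuotientAddGroup.mk (Pi.single 1 1)) fun a => ?_
  obtain ⟨x, rfl⟩ := QuotientAddGroup.mk_surjective a
  obtain ⟨s, hs, hxs⟩ := hL x
  refine ⟨s 0, s 1, by simpa [Fin.sum_univ_two] using hs, ?_⟩
  rw [← QuotientAddGroup.mk_zsmul, ← QuotientAddGroup.mk_zsmul, ← QuotientAddGroup.mk_add,
    QuotientAddGroup.eq_iff_sub_mem]
  convert hxs using 2
  ext i
  fin_cases i <;> simp

/-- The largest cardinality of a finite abelian group with two
generators whose undirected Cayley graph has diameter at most `k` is exactly
`2k² + 2k + 1`; equivalently, `2k² + 2k + 1` is the maximum of `[ℤ² : L]` over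
finite-index subgroups `L ≤ ℤ²` with `S_{2,k} + L = ℤ²`, and it is attained. -/
theorem stmt10 (k : ℕ) :
    IsGreatest {n : ℕ | ∃ (G : AddCommGrpCat.{0}) (g₁ g₂ : G), Finite G ∧
        Nat.card G = n ∧
        ∀ a : G, ∃ a₁ a₂ : ℤ, |a₁| + |a₂| ≤ (k : ℤ) ∧ a = a₁ • g₁ + a₂ • g₂}
      (2 * k ^ 2 + 2 * k + 1) ∧
    IsGreatest {n : ℕ | ∃ L : AddSubgroup (Fin 2 → ℤ), L.index = n ∧ L.index ≠ 0 ∧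
        ∀ x : Fin 2 → ℤ, ∃ s : Fin 2 → ℤ, (∑ i, |s i|) ≤ (k : ℤ) ∧ x - s ∈ L}
      (2 * k ^ 2 + 2 * k + 1) := by
  refine ⟨⟨?_, ?_⟩, ⟨?_, ?_⟩⟩
  · exact ⟨AddCommGrpCat.of (ZMod (2 * k ^ 2 + 2 * k + 1)), (1 : ZMod _),
      ((2 * k + 1 : ℤ) : ZMod _), inferInstanceAs (Finite (ZMod (2 * k ^ 2 + 2 * k + 1))),
      Nat.card_zmod _, exists_eq_zsmul_one_add_zsmul k⟩
  · rintro n ⟨G, g₁, g₂, -, rfl, hG⟩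
    exact natCard_le_of_forall_eq_zsmul_add_zsmul k g₁ g₂ hG
  · refine ⟨(diamondTilingHom k).ker, index_ker_diamondTilingHom k, ?_,
      exists_mem_diamond_sub_mem_ker k⟩
    rw [index_ker_diamondTilingHom]
    omega
  · rintro n ⟨L, rfl, -, hL⟩
    exact (AddSubgroup.index_eq_card L).trans_le (natCard_quotient_le hL)
end

section
/- For every natural number k, the largest possible index [ℤ² : L] over finite-index subgroups L ≤ ℤ² such that S'_{2,k} + L = ℤ² is exactly ⌊(k+2)²/3⌋, and this maximum is attained. -/
/-!
Upper bound: in each coset of `L` pick the point of the quadrant that is least for the order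
"first by `x + y`, then by `y`". Since this order is translation invariant, these points form a
transversal `R` of `L` that is a staircase (closed under moving left or down), and it lies in the
triangle. Let `w` and `h` be the lengths of its bottom row and left column. The representatives of
`(0, h)` and `(w, 0)` lie in the row and in the column, which gives lattice vectors `(-x, h)` and
`(w, -y)`. These force the corners `(w - 1 - x, h - 1)` and `(w - 1, h - 1 - y)` into `R`, hence
into the triangle, and the `x × y` rectangle in the corner of the box `[0, w) × [0, h)` out of `R`.
So `[ℤ² : L] = |R| ≤ wh - xy` with `w + h ≤ k + 2 + min x y`, and optimising gives
`3 [ℤ² : L] ≤ (k + 2)²`.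

Lower bound: the lattice spanned by `(D, 0)` and `(-e, f)` has the box `[0, D) × [0, f)` as a
transversal, and when `e + f ≤ k + 2` and `D + 2f ≤ k + 2 + e` every point of the box either lies
in the triangle or is moved into it by `(-e, f)`.
-/

open AddSubgroup

theorem AddSubgroup.isComplement_iff_exists_sub_mem {G : Type*} [AddCommGroup G] {S : Set G}
    {H : AddSubgroup G} :
    IsComplement S H ↔ (∀ g, ∃ s ∈ S, s - g ∈ H) ∧ ∀ s ∈ S, ∀ t ∈ S, s - t ∈ H → s = t := by
  simp only [isComplement_iff_existsUnique_neg_add_mem, neg_add_eq_sub, SetLike.mem_coe]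
  constructor
  · intro h
    refine ⟨fun g => ?_, fun s hs t ht hst => ?_⟩
    · obtain ⟨⟨s, hs⟩, hsg, -⟩ := h g
      exact ⟨s, hs, sub_mem_comm_iff.1 hsg⟩
    · have := (h t).unique (y₁ := ⟨s, hs⟩) (y₂ := ⟨t, ht⟩) (sub_mem_comm_iff.1 hst)
        (by simp [zero_mem])
      exact congrArg Subtype.val this
  · rintro ⟨hex, huniq⟩ g
    obtain ⟨s, hs, hsg⟩ := hex g
    refine ⟨⟨s, hs⟩, sub_mem_comm_iff.1 hsg, fun ⟨t, ht⟩ htg => Subtype.ext ?_⟩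
    simpa using huniq t ht s hs (by simpa using sub_mem (sub_mem_comm_iff.1 htg) hsg)

namespace TriangleCovering

theorem three_mul_le_sq_of_add_mul_le {n w h x y m : ℤ} (hx : 0 ≤ x) (hy : 0 ≤ y) (hxw : x ≤ w)
    (hyh : y ≤ h) (hxm : w + h ≤ m + x) (hym : w + h ≤ m + y) (hn : n + x * y ≤ w * h) :
    3 * n ≤ m ^ 2 := by
  rcases le_or_gt (w + h) m with hs | hs
  · nlinarith [sq_nonneg (w - h), mul_nonneg hx hy]
  · have hxy : (w + h - m) * (w + h - m) ≤ x * y := mul_le_mul (by omega) (by omega) (by omega) hx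
    nlinarith [sq_nonneg (3 * (w + h) - 4 * m), sq_nonneg (w - h)]

structure IsStaircase (L : AddSubgroup (ℤ × ℤ)) (R : Set (ℤ × ℤ)) : Prop where
  isComplement : IsComplement R L
  nonneg : ∀ a ∈ R, 0 ≤ a
  mem_of_le : ∀ a ∈ R, ∀ b, 0 ≤ b → b ≤ a → b ∈ R

namespace IsStaircase

variable {L : AddSubgroup (ℤ × ℤ)} {R : Set (ℤ × ℤ)} (hR : IsStaircase L R)
include hR

theorem exists_sub_mem (p : ℤ × ℤ) : ∃ a ∈ R, a - p ∈ L :=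
  (isComplement_iff_exists_sub_mem.1 hR.isComplement).1 p

theorem eq_of_sub_mem {a b : ℤ × ℤ} (ha : a ∈ R) (hb : b ∈ R) (h : a - b ∈ L) : a = b :=
  (isComplement_iff_exists_sub_mem.1 hR.isComplement).2 a ha b hb h

theorem zero_mem : (0 : ℤ × ℤ) ∈ R := by
  obtain ⟨a, ha, -⟩ := hR.exists_sub_mem 0
  exact hR.mem_of_le a ha 0 le_rfl (hR.nonneg a ha)

theorem fst_lt {w : ℤ} (hw0 : 0 ≤ w) (hw : (w, 0) ∉ R) {a : ℤ × ℤ} (ha : a ∈ R) : a.1 < w := by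
  by_contra! hwa
  exact hw (hR.mem_of_le a ha _ ⟨hw0, le_rfl⟩ ⟨hwa, (hR.nonneg a ha).2⟩)

theorem snd_lt {h : ℤ} (hh0 : 0 ≤ h) (hh : (0, h) ∉ R) {a : ℤ × ℤ} (ha : a ∈ R) : a.2 < h := by
  by_contra! hha
  exact hh (hR.mem_of_le a ha _ ⟨le_rfl, hh0⟩ ⟨(hR.nonneg a ha).1, hha⟩)

theorem swap : IsStaircase (L.comap (AddEquiv.prodComm : ℤ × ℤ ≃+ ℤ × ℤ).toAddMonoidHom)
    (Prod.swap ⁻¹' R) where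
  isComplement := by
    refine isComplement_iff_exists_sub_mem.2 ⟨fun p => ?_, fun a ha b hb hab => ?_⟩
    · obtain ⟨a, ha, hap⟩ := hR.exists_sub_mem p.swap
      exact ⟨a.swap, by simpa using ha, by simpa using hap⟩
    · exact Prod.swap_injective (hR.eq_of_sub_mem ha hb (by simpa using hab))
  nonneg a ha := by simpa using Prod.swap_le_swap.2 (hR.nonneg _ ha)
  mem_of_le a ha b hb0 hba := hR.mem_of_le _ ha _ (by simpa using Prod.swap_le_swap.2 hb0)
    (Prod.swap_le_swap.2 hba)

theorem not_le_of_add_notMem {b e r : ℤ × ℤ} (hb : b ∈ R) (hbe : b + e ∉ R) (he : 0 ≤ e)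
    (hr : r ∈ R) (hrL : r - (b + e) ∈ L) : ¬e ≤ r := by
  intro her
  have hre : r - e ∈ R := hR.mem_of_le r hr _ (sub_nonneg.2 her) (sub_le_self _ he)
  have : r - e = b := hR.eq_of_sub_mem hre hb (by rwa [sub_sub, add_comm])
  exact hbe (by rwa [← this, sub_add_cancel])

theorem exists_sub_mem_of_column_top {i c : ℤ} (h : (i, c) ∈ R) (h' : (i, c + 1) ∉ R) :
    ∃ t, (t, 0) ∈ R ∧ (i - t, c + 1) ∈ L := by
  obtain ⟨r, hr, hrL⟩ := hR.exists_sub_mem (i, c + 1)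
  have hr0 := hR.nonneg r hr
  have hle := hR.not_le_of_add_notMem h (e := (0, 1)) (by simpa using h')
    (by norm_num [Prod.le_def]) hr (by simpa using hrL)
  simp only [Prod.le_def, Prod.fst_zero, Prod.snd_zero] at hr0 hle
  have hr2 : r.2 = 0 := by omega
  refine ⟨r.1, by rwa [← hr2], ?_⟩
  convert neg_mem hrL using 1
  ext <;> simp [hr2]

theorem exists_lattice_vector_and_corner_mem {w h : ℤ} (hwR : (w - 1, 0) ∈ R) (hw : (w, 0) ∉ R)
    (hhR : (0, h - 1) ∈ R) (hh : (0, h) ∉ R) :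
    ∃ x, 0 ≤ x ∧ x < w ∧ (-x, h) ∈ L ∧ (w - 1 - x, h - 1) ∈ R := by
  have hw0 : 0 ≤ w - 1 := (hR.nonneg _ hwR).1
  have hh0 : 0 ≤ h - 1 := (hR.nonneg _ hhR).2
  have row_mem (u : ℤ) (hu : 0 ≤ u) (huw : u < w) : (u, 0) ∈ R :=
    hR.mem_of_le _ hwR _ ⟨hu, le_rfl⟩ ⟨by simp only; omega, le_rfl⟩
  have col_mem (v : ℤ) (hv : 0 ≤ v) (hvh : v < h) : (0, v) ∈ R :=
    hR.mem_of_le _ hhR _ ⟨le_rfl, hv⟩ ⟨le_rfl, by simp only; omega⟩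
  obtain ⟨x, hxR, hxL⟩ := hR.exists_sub_mem_of_column_top hhR (by simpa using hh)
  have hx0 : 0 ≤ x := (hR.nonneg _ hxR).1
  have hxw : x < w := hR.fst_lt (by omega) hw hxR
  rw [zero_sub, sub_add_cancel] at hxL
  refine ⟨x, hx0, hxw, hxL, ?_⟩
  -- If the column stopped at height `c + 1 < h`, its top would give a lattice vector
  -- `(w - 1 - x - t, c + 1)`; subtracting `(-x, h)` identifies `(w - 1 - t, 0)` with
  -- `(0, h - c - 1)`.
  suffices ∀ c, 0 ≤ c → c < h → (w - 1 - x, c) ∈ R from this _ hh0 (by omega)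
  intro c hc
  induction c, hc using Int.leInduction with
  | base => exact fun _ => row_mem _ (by omega) (by omega)
  | succ c hc ih =>
    intro hch
    by_contra hnot
    obtain ⟨t, htR, htL⟩ := hR.exists_sub_mem_of_column_top (ih (by omega)) hnot
    have ht0 : 0 ≤ t := (hR.nonneg _ htR).1
    have htw : t < w := hR.fst_lt (by omega) hw htR
    have := hR.eq_of_sub_mem (row_mem (w - 1 - t) (by omega) (by omega))
      (col_mem (h - (c + 1)) (by omega) (by omega))
      (by convert sub_mem htL hxL using 1; ext <;> simp only [Prod.fst_sub, Prod.snd_sub] <;> ring)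
    simp only [Prod.mk.injEq] at this
    omega

theorem exists_row_end {k : ℤ} (hk : ∀ a ∈ R, a.1 + a.2 ≤ k) :
    ∃ w, (w - 1, 0) ∈ R ∧ (w, 0) ∉ R := by
  by_contra! H
  have row_mem (n : ℤ) (hn : 0 ≤ n) : (n, 0) ∈ R := by
    induction n, hn using Int.leInduction with
    | base => exact hR.zero_mem
    | succ n _ ih => exact H (n + 1) (by simpa using ih)
  have := hk _ (row_mem (max (k + 1) 0) (le_max_right _ _))
  simp only at this
  omega

theorem ncard_add_mul_le {w h x y : ℤ} (hw : (w, 0) ∉ R) (hh : (0, h) ∉ R)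
    (hx : 0 ≤ x) (hxw : x < w) (hy : 0 ≤ y) (hyh : y ≤ h) (hL : (w - x, h - y) ∈ L) :
    (R.ncard : ℤ) + x * y ≤ w * h := by
  let box := Finset.Ico 0 w ×ˢ Finset.Ico 0 h
  let corner := Finset.Ico (w - x) w ×ˢ Finset.Ico (h - y) h
  have hcorner : corner ⊆ box := by
    intro a
    simp only [corner, box, Finset.mem_product, Finset.mem_Ico]
    omega
  have hsub : R ⊆ ↑(box \ corner) := by
    intro a ha
    have ha0 := hR.nonneg a ha
    have := hR.fst_lt (by omega) hw ha
    have := hR.snd_lt (by omega) hh ha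
    simp only [Prod.le_def, Prod.fst_zero, Prod.snd_zero] at ha0
    simp only [box, corner, Finset.coe_sdiff, Finset.coe_product, Finset.coe_Ico, Set.mem_sdiff,
      Set.mem_prod, Set.mem_Ico]
    refine ⟨by omega, fun ⟨⟨h1, _⟩, h2, _⟩ => ?_⟩
    -- the corner point would be a second representative of the class of `0`
    have hc : (w - x, h - y) ∈ R := hR.mem_of_le a ha _
      (by simp only [Prod.le_def, Prod.fst_zero, Prod.snd_zero]; omega) ⟨h1, h2⟩
    have := hR.eq_of_sub_mem hc hR.zero_mem (by simpa using hL)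
    simp only [Prod.ext_iff, Prod.fst_zero] at this
    omega
  have hcard : ((box \ corner).card : ℤ) = w * h - x * y := by
    rw [Finset.card_sdiff_of_subset hcorner, Nat.cast_sub (Finset.card_le_card hcorner)]
    simp only [box, corner, Finset.card_product, Int.card_Ico, Nat.cast_mul]
    rw [Int.toNat_of_nonneg (by omega), Int.toNat_of_nonneg (by omega),
      Int.toNat_of_nonneg (by omega), Int.toNat_of_nonneg (by omega)]
    ring
  have := Set.ncard_le_ncard hsub (Finset.finite_toSet _)
  rw [Set.ncard_coe_finset] at this
  omega

theorem three_mul_ncard_le {k : ℕ} (hk : ∀ a ∈ R, a.1 + a.2 ≤ k) : 3 * R.ncard ≤ (k + 2) ^ 2 := by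
  obtain ⟨w, hwR, hw⟩ := hR.exists_row_end hk
  obtain ⟨h, hhR, hh⟩ := hR.swap.exists_row_end (k := k) fun a ha => by
    simpa [add_comm] using hk _ ha
  simp only [Set.mem_preimage, Prod.swap_prod_mk] at hhR hh
  obtain ⟨x, hx0, hxw, hxL, hxR⟩ := hR.exists_lattice_vector_and_corner_mem hwR hw hhR hh
  obtain ⟨y, hy0, hyh, hyL, hyR⟩ := hR.swap.exists_lattice_vector_and_corner_mem (w := h) (h := w)
    (by simpa using hhR) (by simpa using hh) (by simpa using hwR) (by simpa using hw)
  simp only [AddEquiv.toAddMonoidHom_eq_coe, mem_comap, AddMonoidHom.coe_coe,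
    AddEquiv.coe_prodComm, Prod.swap_prod_mk, Set.mem_preimage] at hyL hyR
  have hcount := hR.ncard_add_mul_le hw hh hx0 hxw hy0 hyh.le
    (by convert add_mem hxL hyL using 1; ext <;> simp only [Prod.fst_add, Prod.snd_add] <;> ring)
  have hxk : w - 1 - x + (h - 1) ≤ k := hk _ hxR
  have hyk : w - 1 + (h - 1 - y) ≤ k := hk _ hyR
  exact_mod_cast three_mul_le_sq_of_add_mul_le (m := k + 2) hx0 hy0 hxw.le hyh.le (by omega)
    (by omega) hcount

end IsStaircase

-- `toNat` makes this injective only on the quadrant `0 ≤ a`, where it is used.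
def lexKey (a : ℤ × ℤ) : ℕ ×ₗ ℕ := toLex ((a.1 + a.2).toNat, a.2.toNat)

def lexMinReps (L : AddSubgroup (ℤ × ℤ)) : Set (ℤ × ℤ) :=
  {a | 0 ≤ a ∧ ∀ b, 0 ≤ b → b - a ∈ L → lexKey a ≤ lexKey b}

theorem isStaircase_lexMinReps {L : AddSubgroup (ℤ × ℤ)} (hL : ∀ p, ∃ q, 0 ≤ q ∧ p - q ∈ L) :
    IsStaircase L (lexMinReps L) where
  isComplement := by
    refine isComplement_iff_exists_sub_mem.2 ⟨fun p => ?_, fun a ha b hb hab => ?_⟩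
    · obtain ⟨a, ⟨ha0, hap⟩, hmin⟩ := exists_minimalFor_of_wellFoundedLT
        (fun b => 0 ≤ b ∧ b - p ∈ L) lexKey (by simpa [sub_mem_comm_iff] using hL p)
      refine ⟨a, ⟨ha0, fun b hb0 hba => ?_⟩, hap⟩
      exact le_of_not_gt fun hlt => hlt.not_ge
        (hmin ⟨hb0, by simpa using add_mem hba hap⟩ hlt.le)
    · have h1 := ha.2 b hb.1 (sub_mem_comm_iff.1 hab)
      have h2 := hb.2 a ha.1 hab
      have ha0 := ha.1
      have hb0 := hb.1
      simp only [lexKey, Prod.Lex.toLex_le_toLex, Prod.le_def, Prod.fst_zero,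
        Prod.snd_zero] at h1 h2 ha0 hb0
      ext <;> omega
  nonneg a ha := ha.1
  mem_of_le a ha c hc0 hca := by
    refine ⟨hc0, fun b hb0 hbc => ?_⟩
    -- translating by `a - c` carries `c` to `a` and preserves the order of the keys
    have hab := ha.2 (b + (a - c)) (add_nonneg hb0 (sub_nonneg.2 hca))
      (by convert hbc using 1; abel)
    have ha0 := ha.1
    simp only [lexKey, Prod.Lex.toLex_le_toLex, Prod.le_def, Prod.fst_zero, Prod.snd_zero,
      Prod.fst_add, Prod.snd_add, Prod.fst_sub, Prod.snd_sub] at hab hca hc0 hb0 ha0 ⊢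
    omega

def triangle (k : ℕ) : Set (ℤ × ℤ) := {q | 0 ≤ q ∧ q.1 + q.2 ≤ k}

def Covers (L : AddSubgroup (ℤ × ℤ)) (k : ℕ) : Prop := ∀ p, ∃ q ∈ triangle k, p - q ∈ L

theorem three_mul_index_le_of_covers {L : AddSubgroup (ℤ × ℤ)} {k : ℕ} (hL : Covers L k) :
    3 * L.index ≤ (k + 2) ^ 2 := by
  have hR := isStaircase_lexMinReps fun p => (hL p).imp fun q hq => ⟨hq.1.1, hq.2⟩
  rw [← hR.isComplement.ncard_left]
  refine hR.three_mul_ncard_le fun a ha => ?_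
  obtain ⟨q, ⟨hq0, hqk⟩, haq⟩ := hL a
  have haq := ha.2 q hq0 (sub_mem_comm_iff.1 haq)
  have ha0 := ha.1
  simp only [lexKey, Prod.Lex.toLex_le_toLex, Prod.le_def, Prod.fst_zero, Prod.snd_zero]
    at haq ha0 hq0
  omega

def skewLattice (D f e : ℕ) : AddSubgroup (ℤ × ℤ) := closure {((D : ℤ), 0), (-(e : ℤ), (f : ℤ))}

theorem isComplement_box_skewLattice {D f : ℕ} (hD : 0 < D) (hf : 0 < f) (e : ℕ) :
    IsComplement (↑(Finset.Ico 0 (D : ℤ) ×ˢ Finset.Ico 0 (f : ℤ)) : Set (ℤ × ℤ))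
      (skewLattice D f e) := by
  rw [isComplement_iff_exists_sub_mem]
  simp only [skewLattice, mem_closure_pair, Finset.coe_product, Finset.coe_Ico,
    Set.mem_prod, Set.mem_Ico]
  refine ⟨fun p => ?_, fun a ha b hb ⟨m, n, hmn⟩ => ?_⟩
  · refine ⟨((p.1 + e * (p.2 / f)) % D, p.2 % f),
      ⟨⟨Int.emod_nonneg _ (by omega), Int.emod_lt_of_pos _ (by omega)⟩,
        ⟨Int.emod_nonneg _ (by omega), Int.emod_lt_of_pos _ (by omega)⟩⟩,
      -((p.1 + e * (p.2 / f)) / D), -(p.2 / f), ?_⟩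
    ext <;> simp only [Prod.fst_add, Prod.snd_add, Prod.smul_fst, Prod.smul_snd, smul_eq_mul,
      Prod.fst_sub, Prod.snd_sub, Int.emod_def] <;> ring
  · simp only [Prod.ext_iff, Prod.fst_add, Prod.snd_add, Prod.smul_mk, smul_eq_mul, Prod.fst_sub,
      Prod.snd_sub, mul_zero, zero_add] at hmn
    have h2 : a.2 - b.2 = 0 :=
      Int.eq_zero_of_abs_lt_dvd (m := f) ⟨n, by linarith⟩ (abs_lt.2 ⟨by omega, by omega⟩)
    have hn : n = 0 := by
      rcases mul_eq_zero.1 (hmn.2.trans h2) with h | h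
      · exact h
      · omega
    subst hn
    have h1 : a.1 - b.1 = 0 :=
      Int.eq_zero_of_abs_lt_dvd (m := D) ⟨m, by linarith⟩ (abs_lt.2 ⟨by omega, by omega⟩)
    ext <;> omega

theorem index_skewLattice {D f : ℕ} (hD : 0 < D) (hf : 0 < f) (e : ℕ) :
    (skewLattice D f e).index = D * f := by
  rw [← (isComplement_box_skewLattice hD hf e).ncard_left, Set.ncard_coe_finset]
  simp

theorem covers_skewLattice {D f e k : ℕ} (hD : 0 < D) (hf : 0 < f) (hef : e + f ≤ k + 2)
    (hDf : D + 2 * f ≤ k + 2 + e) : Covers (skewLattice D f e) k := by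
  intro p
  obtain ⟨b, hb, hbp⟩ :=
    (isComplement_iff_exists_sub_mem.1 (isComplement_box_skewLattice hD hf e)).1 p
  simp only [Finset.coe_product, Finset.coe_Ico, Set.mem_prod, Set.mem_Ico] at hb
  by_cases hbk : b.1 + b.2 ≤ k
  · exact ⟨b, ⟨⟨hb.1.1, hb.2.1⟩, hbk⟩, sub_mem_comm_iff.1 hbp⟩
  have hq : b + (-(e : ℤ), (f : ℤ)) ∈ triangle k := by
    simp only [triangle, Set.mem_ofPred_eq, Prod.le_def, Prod.fst_zero, Prod.snd_zero,
      Prod.fst_add, Prod.snd_add]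
    omega
  refine ⟨_, hq, ?_⟩
  have hv : (-(e : ℤ), (f : ℤ)) ∈ skewLattice D f e := subset_closure (by simp)
  convert sub_mem (neg_mem hbp) hv using 1
  abel

theorem exists_covers_index_eq (k : ℕ) :
    ∃ L : AddSubgroup (ℤ × ℤ), Covers L k ∧ L.index = (k + 2) ^ 2 / 3 := by
  obtain ⟨t, ht | ht | ht⟩ : ∃ t, k + 2 = 3 * t ∨ k + 2 = 3 * t + 1 ∨ k + 2 = 3 * t + 2 :=
    ⟨(k + 2) / 3, by omega⟩
  · refine ⟨skewLattice (3 * t) t (2 * t),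
      covers_skewLattice (by omega) (by omega) (by omega) (by omega), ?_⟩
    rw [index_skewLattice (by omega) (by omega), ht]
    have : (3 * t) ^ 2 = 3 * (3 * t * t) := by ring
    omega
  · refine ⟨skewLattice (3 * t + 2) t (2 * t + 1),
      covers_skewLattice (by omega) (by omega) (by omega) (by omega), ?_⟩
    rw [index_skewLattice (by omega) (by omega), ht]
    have : (3 * t + 1) ^ 2 = 3 * ((3 * t + 2) * t) + 1 := by ring
    omega
  · refine ⟨skewLattice (3 * t + 1) (t + 1) (2 * t + 1),
      covers_skewLattice (by omega) (by omega) (by omega) (by omega), ?_⟩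
    rw [index_skewLattice (by omega) (by omega), ht]
    have : (3 * t + 2) ^ 2 = 3 * ((3 * t + 1) * (t + 1)) + 1 := by ring
    omega

abbrev finTwoArrow : (Fin 2 → ℤ) ≃+ ℤ × ℤ := (LinearEquiv.finTwoArrow ℤ ℤ).toAddEquiv

theorem covers_iff_finTwo (L : AddSubgroup (ℤ × ℤ)) (k : ℕ) :
    (∀ x : Fin 2 → ℤ, ∃ s : Fin 2 → ℤ, (∀ i, 0 ≤ s i) ∧ (∑ i, s i) ≤ (k : ℤ) ∧
      x - s ∈ L.comap finTwoArrow.toAddMonoidHom) ↔ Covers L k := by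
  constructor
  · intro h p
    obtain ⟨s, hs0, hsk, hsL⟩ := h (finTwoArrow.symm p)
    refine ⟨finTwoArrow s, ⟨⟨hs0 0, hs0 1⟩, by rwa [Fin.sum_univ_two] at hsk⟩, ?_⟩
    simpa only [mem_comap, AddEquiv.coe_toAddMonoidHom, map_sub, AddEquiv.apply_symm_apply]
      using hsL
  · intro h x
    obtain ⟨q, ⟨hq0, hqk⟩, hxq⟩ := h (finTwoArrow x)
    refine ⟨finTwoArrow.symm q, Fin.forall_fin_two.2 hq0, by rwa [Fin.sum_univ_two], ?_⟩
    simpa only [mem_comap, AddEquiv.coe_toAddMonoidHom, map_sub, AddEquiv.apply_symm_apply]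
      using hxq

end TriangleCovering

open TriangleCovering

/-- The largest possible index `[ℤ² : L]` over finite-index subgroups
`L ≤ ℤ²` with `S'_{2,k} + L = ℤ²` is exactly `⌊(k+2)²/3⌋`, and it is attained. -/
theorem stmt12 (k : ℕ) :
    IsGreatest {n : ℕ | ∃ L : AddSubgroup (Fin 2 → ℤ), L.index = n ∧ L.index ≠ 0 ∧
        ∀ x : Fin 2 → ℤ, ∃ s : Fin 2 → ℤ, (∀ i, 0 ≤ s i) ∧ (∑ i, s i) ≤ (k : ℤ) ∧
          x - s ∈ L}
      ((k + 2) ^ 2 / 3) := by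
  constructor
  · obtain ⟨L, hcov, hL⟩ := exists_covers_index_eq k
    have hidx : (L.comap finTwoArrow.toAddMonoidHom).index = (k + 2) ^ 2 / 3 := by
      rw [index_comap_of_surjective _ finTwoArrow.surjective, hL]
    refine ⟨_, hidx, ?_, (covers_iff_finTwo L k).2 hcov⟩
    rw [hidx]
    exact (Nat.div_pos (by nlinarith [Nat.zero_le k]) three_pos).ne'
  · rintro n ⟨L, rfl, -, hcov⟩
    let L' := L.comap finTwoArrow.symm.toAddMonoidHom
    have hL : L = L'.comap finTwoArrow.toAddMonoidHom := by
      ext x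
      simp only [L', mem_comap, AddEquiv.coe_toAddMonoidHom,
        AddEquiv.symm_apply_apply]
    rw [hL] at hcov ⊢
    have := three_mul_index_le_of_covers ((covers_iff_finTwo L' k).1 hcov)
    rw [index_comap_of_surjective _ finTwoArrow.surjective]
    omega
end

section
/- For every natural number k, the largest possible cardinality of a finite abelian group G possessing two generators g_1, g_2 such that every element of G can be written as a_1 g_1 + a_2 g_2 with nonnegative integers a_1, a_2 satisfying a_1 + a_2 ≤ k is exactly ⌊(k+2)²/3⌋. -/
/-!
Upper bound. Order `ℕ × ℕ` degree-lexicographically and represent each `a : G` by its least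
`(x, y)` with `x • g₁ + y • g₂ = a`. These normal forms are in bijection with `G` and form a lower
set inside the triangle `x + y ≤ k`. At an inner corner of this staircase the least representative
of the corner element can be shortened in neither coordinate, so the corner maps to `0`; two
corners would then give a relation `d • g₁ = e • g₂` between two distinct normal forms. Hence the
staircase is an L-shape, the union of a `u × h` and a `w × v` rectangle with `u + h ≤ k + 2` and
`u + w + v ≤ k + 2`, and such a shape has at most `(k + 2)² / 3` cells.

Lower bound. For `b = ⌊(k + 3) / 3⌋` and `M = 2(k + 2) - 3b` the lattice spanned by
`(k + 2 - 2b, b)` and `(M, 0)` has index `bM = ⌊(k + 2)² / 3⌋`. Every residue class has a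
representative in the box `[0, M) × [0, b)`, which lies in the triangle either as it is or after
adding `(k + 2 - 2b, b) - (M, 0)`.
-/

namespace CayleyDiameter

open Finset

section Staircase

variable {A : Set (ℕ × ℕ)}

def innerCorners (A : Set (ℕ × ℕ)) : Set (ℕ × ℕ) :=
  {p | (p.1 + 1, p.2 + 1) ∉ A ∧ (p.1, p.2 + 1) ∈ A ∧ (p.1 + 1, p.2) ∈ A}

theorem mem_of_forall_mem_innerCorners (hA : IsLowerSet A) {x y : ℕ} (hx : (x, 0) ∈ A)
    (hy : (0, y) ∈ A) (h : ∀ p ∈ innerCorners A, x ≤ p.1 ∨ y ≤ p.2) : (x, y) ∈ A := by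
  induction x generalizing y with
  | zero => exact hy
  | succ x ihx =>
    induction y with
    | zero => exact hx
    | succ y ihy =>
      by_contra hxy
      have hl : (x, y + 1) ∈ A :=
        ihx (hA (Prod.mk_le_mk.2 ⟨x.le_succ, le_rfl⟩) hx) hy fun p hp => (h p hp).imp (by omega) id
      have hd : (x + 1, y) ∈ A :=
        ihy (hA (Prod.mk_le_mk.2 ⟨le_rfl, y.le_succ⟩) hy) fun p hp => (h p hp).imp id (by omega)
      have := h (x, y) ⟨hxy, hl, hd⟩
      omega

theorem eq_of_le_of_mem_innerCorners (hA : IsLowerSet A) {p q : ℕ × ℕ}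
    (hp : p ∈ innerCorners A) (hq : q ∈ innerCorners A) (hpq : p ≤ q) : p = q := by
  obtain ⟨h1, h2⟩ := hpq
  by_contra hne
  rcases h1.lt_or_eq with h1 | h1
  · exact hp.1 (hA (Prod.mk_le_mk.2 ⟨h1, by omega⟩) hq.2.1)
  · have h2 : p.2 < q.2 := h2.lt_of_ne fun h2 => hne (Prod.ext h1 h2)
    exact hp.1 (hA (Prod.mk_le_mk.2 ⟨by omega, h2⟩) hq.2.2)

theorem exists_forall_mem_iff_lt (hA : IsLowerSet A) {f : ℕ → ℕ × ℕ} (hf : Monotone f)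
    {n : ℕ} (hn : f n ∉ A) : ∃ N, ∀ x, f x ∈ A ↔ x < N := by
  obtain h | ⟨N, hN⟩ := (hA.preimage hf).eq_univ_or_Iio
  · exact absurd (Set.eq_univ_iff_forall.1 h n) hn
  · exact ⟨N, Set.ext_iff.1 hN⟩

-- Extremal at u = v = K / 3: 12 (u (K - u) + (K - u - v) v) = 4 K² - (2K - 3u - 3v)² - 3 (u - v)².
theorem three_mul_add_mul_le_sq {u h w v K : ℕ} (huh : u + h ≤ K) (huwv : u + w + v ≤ K) :
    3 * (u * h + w * v) ≤ K ^ 2 := by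
  nlinarith [sq_nonneg ((2 * K : ℤ) - 3 * u - 3 * v), sq_nonneg ((u : ℤ) - v)]

theorem three_mul_ncard_le_of_subset {u h w v K : ℕ}
    (hA : A ⊆ ↑(range u ×ˢ range h ∪ Ico u w ×ˢ range v)) (huw : u ≤ w) (huh : u + h ≤ K)
    (hwv : w + v ≤ K) : 3 * A.ncard ≤ K ^ 2 := by
  calc 3 * A.ncard
      ≤ 3 * #(range u ×ˢ range h ∪ Ico u w ×ˢ range v) := by
        grw [Set.ncard_le_ncard hA (Finset.finite_toSet _), Set.ncard_coe_finset]
    _ ≤ 3 * (u * h + (w - u) * v) := by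
        grw [card_union_le]
        simp [card_product]
    _ ≤ K ^ 2 := three_mul_add_mul_le_sq huh (by omega)

theorem three_mul_ncard_le {k : ℕ} (hA : IsLowerSet A) (hk : ∀ x y, (x, y) ∈ A → x + y ≤ k)
    (hc : (innerCorners A).Subsingleton) : 3 * A.ncard ≤ (k + 2) ^ 2 := by
  rcases A.eq_empty_or_nonempty with rfl | ⟨p₀, hp₀⟩
  · simp
  have hout : ∀ x y, k < x + y → (x, y) ∉ A := fun x y h hxy => (hk x y hxy).not_gt h
  obtain ⟨W, hW⟩ := exists_forall_mem_iff_lt hA (f := fun x => (x, 0))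
    (fun _ _ h => ⟨h, le_rfl⟩) (hout (k + 1) 0 (by omega))
  obtain ⟨H, hH⟩ := exists_forall_mem_iff_lt hA (f := fun y => (0, y))
    (fun _ _ h => ⟨le_rfl, h⟩) (hout 0 (k + 1) (by omega))
  have hxW : ∀ p ∈ A, p.1 < W := fun p hp =>
    (hW _).1 (hA (Prod.mk_le_mk.2 ⟨le_rfl, Nat.zero_le _⟩) hp)
  have hyH : ∀ p ∈ A, p.2 < H := fun p hp =>
    (hH _).1 (hA (Prod.mk_le_mk.2 ⟨Nat.zero_le _, le_rfl⟩) hp)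
  have hW₀ := hxW p₀ hp₀
  have hH₀ := hyH p₀ hp₀
  rcases hc.eq_empty_or_singleton with hc | ⟨c, hc⟩
  · have hWH := hk _ _ (mem_of_forall_mem_innerCorners hA (x := W - 1) (y := H - 1)
      ((hW _).2 (by omega)) ((hH _).2 (by omega)) (by simp [hc]))
    refine three_mul_ncard_le_of_subset (u := W) (h := H) (v := 0) (fun p hp => ?_) le_rfl
      (by omega) (by omega)
    simp [hxW p hp, hyH p hp]
  · have hcA : c ∈ innerCorners A := hc ▸ rfl
    have hcW := hxW _ hcA.2.2
    have hleft := hk _ _ (mem_of_forall_mem_innerCorners hA (x := c.1) (y := H - 1)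
      (hA (Prod.mk_le_mk.2 ⟨le_rfl, Nat.zero_le _⟩) hcA.2.1) ((hH _).2 (by omega)) (by simp [hc]))
    have hbot := hk _ _ (mem_of_forall_mem_innerCorners hA (x := W - 1) (y := c.2)
      ((hW _).2 (by omega)) (hA (Prod.mk_le_mk.2 ⟨Nat.zero_le _, le_rfl⟩) hcA.2.2) (by simp [hc]))
    refine three_mul_ncard_le_of_subset (u := c.1 + 1) (h := H) (w := W) (v := c.2 + 1)
      (fun p hp => ?_) hcW.le (by omega) (by omega)
    have hpc : p.1 < c.1 + 1 ∨ p.2 < c.2 + 1 := by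
      by_contra! h
      exact hcA.1 (hA (Prod.mk_le_mk.2 h) hp)
    have := hxW p hp
    have := hyH p hp
    simp only [coe_union, coe_product, coe_range, coe_Ico, Set.mem_union, Set.mem_prod,
      Set.mem_Iio, Set.mem_Ico]
    omega

end Staircase

section NormalForms

def degLex : ℕ × ℕ →+ ℕ ×ₗ ℕ where
  toFun p := toLex (p.1 + p.2, p.2)
  map_zero' := rfl
  map_add' p q :=
    congrArg toLex (Prod.ext (show p.1 + q.1 + (p.2 + q.2) = p.1 + p.2 + (q.1 + q.2) by ring) rfl)

theorem degLex_injective : Function.Injective degLex := by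
  intro p q h
  obtain ⟨h1, h2⟩ := Prod.mk.inj (toLex.injective h)
  exact Prod.ext (by omega) h2

variable {G : Type*} [AddCancelCommMonoid G] (f : ℕ × ℕ →+ G)

def normalForms : Set (ℕ × ℕ) := {p | ∀ q, f q = f p → degLex p ≤ degLex q}

theorem injOn_normalForms : Set.InjOn f (normalForms f) := fun p hp q hq h =>
  degLex_injective ((hp q h.symm).antisymm (hq p h))

theorem exists_mem_normalForms (p : ℕ × ℕ) : ∃ q ∈ normalForms f, f q = f p := by
  obtain ⟨q, hq, hmin⟩ := (InvImage.wf degLex wellFounded_lt).has_min {q | f q = f p} ⟨p, rfl⟩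
  exact ⟨q, fun r hr => not_lt.1 (hmin r (hr.trans hq)), hq⟩

theorem notMem_normalForms_of_add {r s e : ℕ × ℕ} (h : f (r + e) = f (s + e))
    (hlt : degLex (r + e) < degLex (s + e)) : s ∉ normalForms f := by
  intro hs
  rw [map_add, map_add] at h hlt
  exact (hs r (add_right_cancel h)).not_gt (lt_of_add_lt_add_right hlt)

theorem isLowerSet_normalForms : IsLowerSet (normalForms f) := by
  intro p q hqp hp r hr
  obtain ⟨d, rfl⟩ := exists_add_of_le hqp
  have := hp (r + d) (by rw [map_add, map_add, hr])
  rw [map_add, map_add] at this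
  exact le_of_add_le_add_right this

theorem add_le_of_mem_normalForms {p q : ℕ × ℕ} (hp : p ∈ normalForms f) (hq : f q = f p) :
    p.1 + p.2 ≤ q.1 + q.2 :=
  Prod.Lex.monotone_fst_ofLex (hp q hq)

theorem map_eq_zero_of_mem_innerCorners {p : ℕ × ℕ} (hp : p ∈ innerCorners (normalForms f)) :
    f (p.1 + 1, p.2 + 1) = 0 := by
  obtain ⟨hc, hl, hd⟩ := hp
  simp only [normalForms, Set.mem_ofPred_eq, not_forall, not_le] at hc
  obtain ⟨q, hfq, hlt⟩ := hc
  have hq1 : q.1 = 0 := by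
    by_contra h
    have hq : (q.1 - 1, q.2) + (1, 0) = q := Prod.ext (by simp; omega) rfl
    exact notMem_normalForms_of_add f (e := (1, 0)) (by rwa [hq]) (by rwa [hq]) hl
  have hq2 : q.2 = 0 := by
    by_contra h
    have hq : (q.1, q.2 - 1) + (0, 1) = q := Prod.ext rfl (by simp; omega)
    exact notMem_normalForms_of_add f (e := (0, 1)) (by rwa [hq]) (by rwa [hq]) hd
  rw [← hfq, show q = 0 from Prod.ext hq1 hq2, map_zero]

theorem eq_of_mem_innerCorners_normalForms {p q : ℕ × ℕ} (hp : p ∈ innerCorners (normalForms f))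
    (hq : q ∈ innerCorners (normalForms f)) (h1 : p.1 ≤ q.1) (h2 : q.2 ≤ p.2) : p = q := by
  have hp' : ((p.1 + 1, p.2 + 1) : ℕ × ℕ) = (0, p.2 - q.2) + (p.1 + 1, q.2 + 1) :=
    Prod.ext (by simp) (by simp; omega)
  have hq' : ((q.1 + 1, q.2 + 1) : ℕ × ℕ) = (q.1 - p.1, 0) + (p.1 + 1, q.2 + 1) :=
    Prod.ext (by simp; omega) (by simp)
  have hdiag : f (0, p.2 - q.2) = f (q.1 - p.1, 0) := by
    apply add_right_cancel (b := f (p.1 + 1, q.2 + 1))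
    rw [← map_add, ← map_add, ← hp', ← hq', map_eq_zero_of_mem_innerCorners f hp,
      map_eq_zero_of_mem_innerCorners f hq]
  have hmem₁ : (0, p.2 - q.2) ∈ normalForms f :=
    isLowerSet_normalForms f (Prod.mk_le_mk.2 ⟨Nat.zero_le _, by omega⟩) hp.2.1
  have hmem₂ : (q.1 - p.1, 0) ∈ normalForms f :=
    isLowerSet_normalForms f (Prod.mk_le_mk.2 ⟨by omega, Nat.zero_le _⟩) hq.2.1
  obtain ⟨hx, hy⟩ := Prod.mk.inj (injOn_normalForms f hmem₁ hmem₂ hdiag)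
  exact Prod.ext (by omega) (by omega)

theorem innerCorners_normalForms_subsingleton : (innerCorners (normalForms f)).Subsingleton := by
  intro p hp q hq
  have hA := isLowerSet_normalForms f
  rcases le_total p.1 q.1 with h1 | h1 <;> rcases le_total p.2 q.2 with h2 | h2
  · exact eq_of_le_of_mem_innerCorners hA hp hq ⟨h1, h2⟩
  · exact eq_of_mem_innerCorners_normalForms f hp hq h1 h2
  · exact (eq_of_mem_innerCorners_normalForms f hq hp h1 h2).symm
  · exact (eq_of_le_of_mem_innerCorners hA hq hp ⟨h1, h2⟩).symm

end NormalForms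

theorem three_mul_card_le {G : Type*} [AddCancelCommMonoid G] (g₁ g₂ : G) (k : ℕ)
    (hcover : ∀ a : G, ∃ x y : ℕ, x + y ≤ k ∧ x • g₁ + y • g₂ = a) :
    3 * Nat.card G ≤ (k + 2) ^ 2 := by
  set f := (multiplesHom G g₁).coprod (multiplesHom G g₂)
  have himage : f '' normalForms f = Set.univ := by
    refine Set.eq_univ_of_forall fun a => ?_
    obtain ⟨x, y, -, rfl⟩ := hcover a
    obtain ⟨q, hq, hfq⟩ := exists_mem_normalForms f (x, y)
    exact ⟨q, hq, hfq⟩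
  rw [← Set.ncard_univ, ← himage, (injOn_normalForms f).ncard_image]
  refine three_mul_ncard_le (isLowerSet_normalForms f) (fun x y hp => ?_)
    (innerCorners_normalForms_subsingleton f)
  obtain ⟨x', y', hxy, h⟩ := hcover (f (x, y))
  exact (add_le_of_mem_normalForms f hp (q := (x', y')) h).trans hxy

section Lattice

def lattice (a b M : ℤ) : Submodule ℤ (ℤ × ℤ) := Submodule.span ℤ (Set.range ![(a, b), (M, 0)])

theorem mem_lattice {a b M : ℤ} {p : ℤ × ℤ} :
    p ∈ lattice a b M ↔ ∃ m n : ℤ, m • (a, b) + n • (M, 0) = p := by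
  rw [lattice, Matrix.range_cons, Matrix.range_cons, Matrix.range_empty, Set.union_empty,
    Set.singleton_union, Submodule.mem_span_pair]

theorem index_lattice {a b M : ℤ} (hb : b ≠ 0) (hM : M ≠ 0) :
    (lattice a b M).toAddSubgroup.index = (b * M).natAbs := by
  have hli : LinearIndependent ℤ ![(a, b), (M, 0)] := by
    rw [LinearIndependent.pair_iff]
    intro s t h
    simp only [Prod.ext_iff, Prod.smul_mk, smul_eq_mul, Prod.fst_add, Prod.snd_add,
      mul_zero, add_zero, Prod.fst_zero, Prod.snd_zero] at h
    obtain rfl : s = 0 := (mul_eq_zero.1 h.2).resolve_right hb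
    simpa [hM] using h.1
  rw [AddSubgroup.index_eq_natAbs_det (Module.Basis.finTwoProd ℤ) _ (Module.Basis.span hli),
    Module.Basis.det_apply, Matrix.det_fin_two]
  simp only [Module.Basis.toMatrix_apply]
  erw [Module.Basis.span_apply, Module.Basis.span_apply]
  simp [mul_comm]

theorem exists_triangle_sub_mem_lattice (k b : ℤ) (hb : 0 < b) (hbk : 3 * b ≤ k + 3) (p : ℤ × ℤ) :
    ∃ a₁ a₂ : ℤ, 0 ≤ a₁ ∧ 0 ≤ a₂ ∧ a₁ + a₂ ≤ k ∧
      p - (a₁, a₂) ∈ lattice (k + 2 - 2 * b) b (2 * (k + 2) - 3 * b) := by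
  obtain ⟨x, y⟩ := p
  set M := 2 * (k + 2) - 3 * b
  have hM : 0 < M := by omega
  set j := y / b
  set s := (x - (k + 2 - 2 * b) * j) / M
  set x' := (x - (k + 2 - 2 * b) * j) % M
  set t := y % b
  have hy : b * j + t = y := Int.mul_ediv_add_emod y b
  have hx : M * s + x' = x - (k + 2 - 2 * b) * j := Int.mul_ediv_add_emod _ M
  have ht := Int.emod_nonneg y hb.ne'
  have ht' := Int.emod_lt_of_pos y hb
  have hx₀ := Int.emod_nonneg (x - (k + 2 - 2 * b) * j) hM.ne'
  have hx' := Int.emod_lt_of_pos (x - (k + 2 - 2 * b) * j) hM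
  rcases le_or_gt (x' + t) k with hsmall | hlarge
  · refine ⟨x', t, hx₀, ht, hsmall, mem_lattice.2 ⟨j, s, Prod.ext ?_ ?_⟩⟩ <;>
      simp <;> linarith
  · refine ⟨x' - (k + 2 - b), t + b, by linarith, by linarith, by linarith,
      mem_lattice.2 ⟨j - 1, s + 1, Prod.ext ?_ ?_⟩⟩ <;> simp <;> linarith

theorem div_three_mul_sub_eq (k : ℤ) :
    (k + 3) / 3 * (2 * (k + 2) - 3 * ((k + 3) / 3)) = (k + 2) ^ 2 / 3 := by
  have hsq : 3 * ((k + 3) / 3 * (2 * (k + 2) - 3 * ((k + 3) / 3)))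
      + (k + 2 - 3 * ((k + 3) / 3)) ^ 2 = (k + 2) ^ 2 := by ring
  have h₁ : -1 ≤ k + 2 - 3 * ((k + 3) / 3) := by omega
  have h₂ : k + 2 - 3 * ((k + 3) / 3) ≤ 1 := by omega
  have h₃ : (k + 2 - 3 * ((k + 3) / 3)) ^ 2 ≤ 1 := by nlinarith
  have h₄ := sq_nonneg (k + 2 - 3 * ((k + 3) / 3))
  omega

end Lattice

end CayleyDiameter

open CayleyDiameter

/-- The largest cardinality of a finite abelian group with two
generators whose directed Cayley graph has diameter at most `k` is exactly
`⌊(k+2)²/3⌋`. -/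
theorem stmt13 (k : ℕ) :
    IsGreatest {n : ℕ | ∃ (G : AddCommGrpCat.{0}) (g₁ g₂ : G), Finite G ∧
        Nat.card G = n ∧
        ∀ a : G, ∃ a₁ a₂ : ℤ, 0 ≤ a₁ ∧ 0 ≤ a₂ ∧ a₁ + a₂ ≤ (k : ℤ) ∧
          a = a₁ • g₁ + a₂ • g₂}
      ((k + 2) ^ 2 / 3) := by
  refine ⟨?_, ?_⟩
  · set b : ℤ := (k + 3) / 3
    set L := (lattice (k + 2 - 2 * b) b (2 * (k + 2) - 3 * b)).toAddSubgroup
    have hcard : Nat.card ((ℤ × ℤ) ⧸ L) = (k + 2) ^ 2 / 3 := by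
      rw [← AddSubgroup.index, index_lattice (by omega) (by omega), div_three_mul_sub_eq,
        show ((k : ℤ) + 2) ^ 2 / 3 = (((k + 2) ^ 2 / 3 : ℕ) : ℤ) by norm_cast, Int.natAbs_natCast]
    refine ⟨.of ((ℤ × ℤ) ⧸ L), QuotientAddGroup.mk (1, 0), QuotientAddGroup.mk (0, 1),
      Nat.finite_of_card_ne_zero (hcard ▸ (Nat.div_pos (by ring_nf; omega) three_pos).ne'), hcard,
      fun a => ?_⟩
    induction a using QuotientAddGroup.induction_on with | H p =>
    obtain ⟨a₁, a₂, h₁, h₂, hk, hp⟩ := exists_triangle_sub_mem_lattice k b (by omega) (by omega) p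
    refine ⟨a₁, a₂, h₁, h₂, hk, ?_⟩
    rw [← QuotientAddGroup.mk_zsmul, ← QuotientAddGroup.mk_zsmul, ← QuotientAddGroup.mk_add,
      QuotientAddGroup.eq_iff_sub_mem]
    simpa [L] using hp
  · rintro n ⟨G, g₁, g₂, -, rfl, hcover⟩
    rw [Nat.le_div_iff_mul_le three_pos, mul_comm]
    refine three_mul_card_le g₁ g₂ k fun a => ?_
    obtain ⟨a₁, a₂, h₁, h₂, hk, rfl⟩ := hcover a
    lift a₁ to ℕ using h₁
    lift a₂ to ℕ using h₂
    exact ⟨a₁, a₂, by omega, by simp⟩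
end

section
/- For every natural number k ≥ 0 there exists a finite cyclic group G and generators g_1, g_2, g_3 of G such that every element of G can be written as a_1 g_1 + a_2 g_2 + a_3 g_3 with integers a_i satisfying |a_1|+|a_2|+|a_3| ≤ k, and |G| = n, where n = (32k³+48k²+54k+27)/27 if k ≡ 0 (mod 3), n = (32k³+48k²+78k+31)/27 if k ≡ 1 (mod 3), and n = (32k³+48k²+54k+11)/27 if k ≡ 2 (mod 3). Equivalently, there exists a finite-index subgroup L ≤ ℤ³ with ℤ³/L cyclic, S_{3,k} + L = ℤ³, and [ℤ³ : L] = n. -/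
/-!
Send `x ∈ ℤ³` to `x₁ + a x₂ + b x₃ ∈ ℤ/n`. The kernel `L` has `ℤ³/L ≅ ℤ/n`, and `S_{3,k} + L = ℤ³`
says that the residues `c₁ + a c₂ + b c₃` with `|c₁| + |c₂| + |c₃| ≤ k` exhaust `ℤ/n`. For
`k = 3m + i` and the paper's choice of `n, a, b` this is checked by hand: since `c ↦ -c` preserves
the octahedron, only residues `0 ≤ r < n/2` matter; writing `r` in the mixed radix `(b, a, 1)` puts
its digit vector in a box, and that box is covered by a few translates of `S_{3,k}` by vectors of `L`.
-/

section CayleyDiameter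

variable {ι G : Type*} [Fintype ι] [AddCommGroup G]

def CayleyDiameterLE (g : ι → G) (k : ℤ) : Prop :=
  ∀ a : G, ∃ c : ι → ℤ, ∑ i, |c i| ≤ k ∧ ∑ i, c i • g i = a

theorem CayleyDiameterLE.exists_addSubgroup {g : ι → G} {k : ℤ} (h : CayleyDiameterLE g k) :
    ∃ L : AddSubgroup (ι → ℤ), Nonempty ((ι → ℤ) ⧸ L ≃+ G) ∧
      ∀ x : ι → ℤ, ∃ s : ι → ℤ, ∑ i, |s i| ≤ k ∧ x - s ∈ L := by
  let f := (Fintype.linearCombination ℤ g).toAddMonoidHom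
  have hf : ∀ x, f x = ∑ i, x i • g i := Fintype.linearCombination_apply ℤ g
  have hsurj : Function.Surjective f := fun a => by
    obtain ⟨c, -, hc⟩ := h a
    exact ⟨c, (hf c).trans hc⟩
  refine ⟨f.ker, ⟨QuotientAddGroup.quotientKerEquivOfSurjective f hsurj⟩, fun x => ?_⟩
  obtain ⟨s, hs, hsx⟩ := h (f x)
  refine ⟨s, hs, ?_⟩
  rw [AddMonoidHom.mem_ker, map_sub, hf s, hsx, sub_self]

end CayleyDiameter

theorem exists_of_cayleyDiameterLE_zmod {ι : Type*} [Fintype ι] {n k : ℕ} (hn : n ≠ 0)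
    {g : ι → ZMod n} (h : CayleyDiameterLE g k) :
    (∃ (G : AddCommGrpCat.{0}) (g : ι → G), Finite G ∧ IsAddCyclic G ∧ Nat.card G = n ∧
      CayleyDiameterLE g k) ∧
    (∃ L : AddSubgroup (ι → ℤ), IsAddCyclic ((ι → ℤ) ⧸ L) ∧ L.index = n ∧ L.index ≠ 0 ∧
      ∀ x : ι → ℤ, ∃ s : ι → ℤ, ∑ i, |s i| ≤ (k : ℤ) ∧ x - s ∈ L) := by
  have : NeZero n := ⟨hn⟩
  refine ⟨⟨AddCommGrpCat.of (ZMod n), g, inferInstanceAs (Finite (ZMod n)),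
    inferInstanceAs (IsAddCyclic (ZMod n)), Nat.card_zmod n, h⟩, ?_⟩
  obtain ⟨L, ⟨e⟩, hL⟩ := h.exists_addSubgroup
  have hindex : L.index = n := by
    rw [AddSubgroup.index, Nat.card_congr e.toEquiv, Nat.card_zmod]
  exact ⟨L, isAddCyclic_of_surjective e.symm e.symm.surjective, hindex, hindex ▸ hn, hL⟩

theorem ZMod.exists_eq_intCast_or_eq_neg {n : ℕ} (hn : Odd n) (z : ZMod n) :
    ∃ r : ℤ, 0 ≤ r ∧ 2 * r < n ∧ (z = r ∨ z = -r) := by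
  have : NeZero n := ⟨hn.pos.ne'⟩
  have hv := z.val_lt
  have hodd := Nat.odd_iff.mp hn
  by_cases hv2 : 2 * z.val < n
  · exact ⟨z.val, by positivity, by exact_mod_cast hv2, .inl (by simp)⟩
  · exact ⟨n - z.val, by omega, by omega, .inr (by simp)⟩

theorem cayleyDiameterLE_zmod_of_forall {n : ℕ} {a b k : ℤ} (hn : Odd n)
    (h : ∀ r : ℤ, 0 ≤ r → 2 * r < n →
      ∃ c₁ c₂ c₃ : ℤ, |c₁| + |c₂| + |c₃| ≤ k ∧ (n : ℤ) ∣ c₁ + a * c₂ + b * c₃ - r) :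
    CayleyDiameterLE (![1, a, b] : Fin 3 → ZMod n) k := by
  intro z
  obtain ⟨r, hr0, hrn, hz⟩ := z.exists_eq_intCast_or_eq_neg hn
  obtain ⟨c₁, c₂, c₃, hc, hdvd⟩ := h r hr0 hrn
  have hsum : ((c₁ + a * c₂ + b * c₃ : ℤ) : ZMod n) = r :=
    (ZMod.intCast_eq_intCast_iff_dvd_sub _ _ _).2 (dvd_sub_comm.mp hdvd)
  rcases hz with rfl | rfl
  · refine ⟨![c₁, c₂, c₃], by simpa [Fin.sum_univ_three] using hc, ?_⟩
    simp [Fin.sum_univ_three, ← hsum, mul_comm]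
  · refine ⟨-![c₁, c₂, c₃], by simpa [Fin.sum_univ_three] using hc, ?_⟩
    simp [Fin.sum_univ_three, ← hsum, mul_comm]

theorem Int.exists_eq_mul_add_of_lt_mul (b M r : ℤ) (hb : 0 < b) (hr : 0 ≤ r)
    (hrM : r < b * (M + 1)) : ∃ t y, r = b * t + y ∧ 0 ≤ t ∧ t ≤ M ∧ 0 ≤ y ∧ y < b :=
  ⟨r / b, r % b, (Int.mul_ediv_add_emod r b).symm, Int.ediv_nonneg hr hb.le,
    Int.lt_add_one_iff.mp ((Int.ediv_lt_iff_lt_mul hb).mpr (by linarith)),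
    Int.emod_nonneg r hb.ne', Int.emod_lt_of_pos r hb⟩

theorem cayleyDiameterLE_three_mul (m : ℕ) :
    CayleyDiameterLE (![1, ((4 * m + 1 : ℤ) : ZMod _), ((16 * m ^ 2 + 4 * m + 1 : ℤ) : ZMod _)] :
      Fin 3 → ZMod (32 * m ^ 3 + 16 * m ^ 2 + 6 * m + 1)) (3 * m : ℕ) := by
  refine cayleyDiameterLE_zmod_of_forall ⟨16 * m ^ 3 + 8 * m ^ 2 + 3 * m, by ring⟩
    fun r hr0 hrn => ?_
  have hm : (0 : ℤ) ≤ m := m.cast_nonneg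
  push_cast at hrn ⊢
  obtain ⟨t, y, rfl, ht0, htm, hy0, hyb⟩ := Int.exists_eq_mul_add_of_lt_mul
    (16 * m ^ 2 + 4 * m + 1) m r (by positivity) hr0 (by nlinarith)
  -- the balanced last digit is `s - 2m ∈ [-2m, 2m]`
  obtain ⟨q, s, hys, hq0, hqm, hs0, hsa⟩ := Int.exists_eq_mul_add_of_lt_mul
    (4 * m + 1) (4 * m) (y + 2 * m) (by omega) (by omega) (by nlinarith)
  -- `(2m+1, 2m, 2m)`, `(-2m, 2m+1, 2m)` and `(1, 4m, -1)` lie in the kernel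
  have hbox : |s - 2 * m| + |q| + |t| ≤ 3 * m ∨
      |s - 4 * m - 1| + |q - 2 * m| + |t - 2 * m| ≤ 3 * m ∨
      |s| + |q - 2 * m - 1| + |t - 2 * m| ≤ 3 * m ∨
      |s - 2 * m - 1| + |q - 4 * m| + |t + 1| ≤ 3 * m := by
    simp only [Int.abs_eq_natAbs]; omega
  rcases hbox with hc | hc | hc | hc
  · exact ⟨_, _, _, hc, ⟨0, by linear_combination -hys⟩⟩
  · exact ⟨_, _, _, hc, ⟨-1, by linear_combination -hys⟩⟩
  · exact ⟨_, _, _, hc, ⟨-1, by linear_combination -hys⟩⟩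
  · exact ⟨_, _, _, hc, ⟨0, by linear_combination -hys⟩⟩

theorem cayleyDiameterLE_three_mul_add_one (m : ℕ) :
    CayleyDiameterLE (![1, ((8 * m ^ 2 + 6 * m + 2 : ℤ) : ZMod _),
      ((32 * m ^ 3 + 40 * m ^ 2 + 20 * m + 3 : ℤ) : ZMod _)] :
      Fin 3 → ZMod (32 * m ^ 3 + 48 * m ^ 2 + 30 * m + 7)) (3 * m + 1 : ℕ) := by
  refine cayleyDiameterLE_zmod_of_forall ⟨16 * m ^ 3 + 24 * m ^ 2 + 15 * m + 3, by ring⟩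
    fun r hr0 hrn => ?_
  have hm : (0 : ℤ) ≤ m := m.cast_nonneg
  push_cast at hrn ⊢
  obtain ⟨q, s, rfl, hq0, hqm, hs0, hsa⟩ := Int.exists_eq_mul_add_of_lt_mul
    (8 * m ^ 2 + 6 * m + 2) (2 * m + 1) r (by positivity) hr0 (by nlinarith)
  obtain ⟨j, d, hsd, hj0, hjm, hd0, hdp⟩ := Int.exists_eq_mul_add_of_lt_mul
    (4 * m + 2) (2 * m) s (by omega) hs0 (by linarith)
  -- `4m + 2 ≡ -(a + b) [ZMOD n]`, so the digit `j` is traded for `-j` in the last two coordinates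
  have hbox : |d| + |q - j| + |-j| ≤ 3 * m + 1 ∨
      |d - 4 * m - 2| + |q - j - 1| + |-j - 1| ≤ 3 * m + 1 ∨
      |d - 2 * m - 2| + |q + 2 * m - j + 1| + |2 * m - j| ≤ 3 * m + 1 ∨
      |d - 2 * m - 1| + |q - 2 * m - 1 - j| + |2 * m + 1 - j| ≤ 3 * m + 1 := by
    simp only [Int.abs_eq_natAbs]; omega
  rcases hbox with hc | hc | hc | hc
  · exact ⟨_, _, _, hc, ⟨-j, by linear_combination -hsd⟩⟩
  · exact ⟨_, _, _, hc, ⟨-j - 1, by linear_combination -hsd⟩⟩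
  · exact ⟨_, _, _, hc, ⟨2 * m - j, by linear_combination -hsd⟩⟩
  · exact ⟨_, _, _, hc, ⟨2 * m - j, by linear_combination -hsd⟩⟩

theorem cayleyDiameterLE_three_mul_add_two (m : ℕ) :
    CayleyDiameterLE (![1, ((4 * m + 3 : ℤ) : ZMod _), ((16 * m ^ 2 + 28 * m + 13 : ℤ) : ZMod _)] :
      Fin 3 → ZMod (32 * m ^ 3 + 80 * m ^ 2 + 70 * m + 21)) (3 * m + 2 : ℕ) := by
  refine cayleyDiameterLE_zmod_of_forall ⟨16 * m ^ 3 + 40 * m ^ 2 + 35 * m + 10, by ring⟩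
    fun r hr0 hrn => ?_
  have hm : (0 : ℤ) ≤ m := m.cast_nonneg
  push_cast at hrn ⊢
  obtain ⟨t, y, rfl, ht0, htm, hy0, hyb⟩ := Int.exists_eq_mul_add_of_lt_mul
    (16 * m ^ 2 + 28 * m + 13) m r (by positivity) hr0 (by nlinarith)
  -- the balanced last digit is `s - 2m - 1 ∈ [-2m-1, 2m+1]`
  obtain ⟨q, s, hys, hq0, hqm, hs0, hsa⟩ := Int.exists_eq_mul_add_of_lt_mul
    (4 * m + 3) (4 * m + 4) (y + 2 * m + 1) (by omega) (by omega) (by nlinarith)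
  -- `(2m+2, 2m+2, 2m+1)`, `(-2m-1, 2m+3, 2m+1)`, `(1, 4m+4, -1)` and `(-4m-2, 4m+5, -1)` lie in
  -- the kernel
  have hbox : |s - 2 * m - 1| + |q| + |t| ≤ 3 * m + 2 ∨
      |s - 4 * m - 3| + |q - 2 * m - 2| + |t - 2 * m - 1| ≤ 3 * m + 2 ∨
      |s| + |q - 2 * m - 3| + |t - 2 * m - 1| ≤ 3 * m + 2 ∨
      |s - 2 * m - 2| + |q - 4 * m - 4| + |t + 1| ≤ 3 * m + 2 ∨
      |s + 2 * m + 1| + |q - 4 * m - 5| + |t + 1| ≤ 3 * m + 2 := by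
    simp only [Int.abs_eq_natAbs]; omega
  rcases hbox with hc | hc | hc | hc | hc
  · exact ⟨_, _, _, hc, ⟨0, by linear_combination -hys⟩⟩
  · exact ⟨_, _, _, hc, ⟨-1, by linear_combination -hys⟩⟩
  · exact ⟨_, _, _, hc, ⟨-1, by linear_combination -hys⟩⟩
  · exact ⟨_, _, _, hc, ⟨0, by linear_combination -hys⟩⟩
  · exact ⟨_, _, _, hc, ⟨0, by linear_combination -hys⟩⟩

/-- For each `k` there is a finite cyclic group with three generators
whose undirected Cayley graph has diameter at most `k` and whose order is
`(32k³+48k²+54k+27)/27`, `(32k³+48k²+78k+31)/27`, or `(32k³+48k²+54k+11)/27`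
according as `k ≡ 0, 1, 2 (mod 3)`; equivalently there is a finite-index subgroup
`L ≤ ℤ³` with `ℤ³/L` cyclic, `S_{3,k} + L = ℤ³`, and `[ℤ³ : L]` equal to this value. -/
theorem stmt14 (k : ℕ) :
    (∃ (G : AddCommGrpCat.{0}) (g : Fin 3 → G), Finite G ∧ IsAddCyclic G ∧
      Nat.card G = (if k % 3 = 0 then (32 * k ^ 3 + 48 * k ^ 2 + 54 * k + 27) / 27
        else if k % 3 = 1 then (32 * k ^ 3 + 48 * k ^ 2 + 78 * k + 31) / 27
        else (32 * k ^ 3 + 48 * k ^ 2 + 54 * k + 11) / 27) ∧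
      ∀ a : G, ∃ c : Fin 3 → ℤ, (∑ i, |c i|) ≤ (k : ℤ) ∧ (∑ i, c i • g i) = a) ∧
    (∃ L : AddSubgroup (Fin 3 → ℤ), IsAddCyclic ((Fin 3 → ℤ) ⧸ L) ∧
      L.index = (if k % 3 = 0 then (32 * k ^ 3 + 48 * k ^ 2 + 54 * k + 27) / 27
        else if k % 3 = 1 then (32 * k ^ 3 + 48 * k ^ 2 + 78 * k + 31) / 27
        else (32 * k ^ 3 + 48 * k ^ 2 + 54 * k + 11) / 27) ∧ L.index ≠ 0 ∧
      ∀ x : Fin 3 → ℤ, ∃ s : Fin 3 → ℤ, (∑ i, |s i|) ≤ (k : ℤ) ∧ x - s ∈ L) := by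
  obtain ⟨m, rfl | rfl | rfl⟩ : ∃ m, k = 3 * m ∨ k = 3 * m + 1 ∨ k = 3 * m + 2 :=
    ⟨k / 3, by omega⟩
  · have hn : (32 * (3 * m) ^ 3 + 48 * (3 * m) ^ 2 + 54 * (3 * m) + 27) / 27 =
        32 * m ^ 3 + 16 * m ^ 2 + 6 * m + 1 := Nat.div_eq_of_eq_mul_left (by norm_num) (by ring)
    rw [if_pos (by omega), hn]
    exact exists_of_cayleyDiameterLE_zmod (by positivity) (cayleyDiameterLE_three_mul m)
  · have hn : (32 * (3 * m + 1) ^ 3 + 48 * (3 * m + 1) ^ 2 + 78 * (3 * m + 1) + 31) / 27 =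
        32 * m ^ 3 + 48 * m ^ 2 + 30 * m + 7 := Nat.div_eq_of_eq_mul_left (by norm_num) (by ring)
    rw [if_neg (by omega), if_pos (by omega), hn]
    exact exists_of_cayleyDiameterLE_zmod (by positivity) (cayleyDiameterLE_three_mul_add_one m)
  · have hn : (32 * (3 * m + 2) ^ 3 + 48 * (3 * m + 2) ^ 2 + 54 * (3 * m + 2) + 11) / 27 =
        32 * m ^ 3 + 80 * m ^ 2 + 70 * m + 21 := Nat.div_eq_of_eq_mul_left (by norm_num) (by ring)
    rw [if_neg (by omega), if_neg (by omega), hn]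
    exact exists_of_cayleyDiameterLE_zmod (by positivity) (cayleyDiameterLE_three_mul_add_two m)
end
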